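/- arXiv:0910.3448 — 5 statements merged into one kernel-verified Lean document; each statement's English description precedes it below -/
import Mathlib

section
/- For any stationary sequence $(X_k)$ of centered square-integrable random variables adapted to a filtration $(\mathcal{F}_k)$, with $S_n = \sum_{i=0}^{n-1}X_i$, one has $\mathbb{E}\left[\max_{1\leq i\leq n} S_i^2\right] \leq 8n\,\mathbb{E}[X_0^2] + 16\sum_{k=2}^n \mathbb{E}\left|X_0\,\mathbb{E}(S_k - S_1 \mid \mathcal{F}_0)\right|$. -/
/-!
Let `M⁺ₙ = max (0, S₁, …, Sₙ)` and let `M⁻ₙ` be the same running maximum for `-S`. Doob's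
pathwise argument gives `(M⁺ₙ)² ≤ 4 Sₙ² - 4 ∑_{j<n} (M⁺ⱼ₊₁ - M⁺ⱼ) (Sₙ - Sⱼ₊₁)`, and likewise for
`M⁻`, while `max_{i ≤ n} Sᵢ² ≤ (M⁺ₙ)² + (M⁻ₙ)²`. The increments of `M⁺` and `M⁻` at time `j` are
`ℱⱼ`-measurable and squeezed between `0` and `Xⱼ⁺`, resp. `Xⱼ⁻`, so conditioning on `ℱⱼ` bounds
the expectation of the `j`-th term of the combined sum by `E[(Xⱼ E(Sₙ - Sⱼ₊₁ | ℱⱼ))⁻]`; by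
stationarity this is `E[(X₀ E(S_{n-j} - S₁ | ℱ₀))⁻]`. Stationarity also gives
`E Sₙ² = n E X₀² + 2 ∑_{k ≤ n} E[X₀ E(Sₖ - S₁ | ℱ₀)]`, and `16 z + 4 z⁻ ≤ 16 |z|` concludes.
-/

open MeasureTheory Finset

namespace MeasureTheory

variable {Ω : Type*} {m m0 : MeasurableSpace Ω} {μ : Measure Ω} [IsFiniteMeasure μ]

lemma integral_mul_condExp (hm : m ≤ m0) {Z Y : Ω → ℝ} (hZ : StronglyMeasurable[m] Z)
    (hZY : Integrable (Z * Y) μ) (hY : Integrable Y μ) :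
    ∫ ω, Z ω * Y ω ∂μ = ∫ ω, Z ω * μ[Y | m] ω ∂μ :=
  (integral_condExp hm).symm.trans
    (integral_congr_ae (condExp_mul_of_stronglyMeasurable_left hZ hZY hY))

end MeasureTheory

namespace MeasureTheory.MeasurePreserving

variable {α β : Type*} {m : MeasurableSpace β} [mα : MeasurableSpace α] [mβ : MeasurableSpace β]
  {μ : Measure α} {ν : Measure β} {f : α → β}

lemma integral_comp_of_aestronglyMeasurable
    {E : Type*} [NormedAddCommGroup E] [NormedSpace ℝ E] (hf : MeasurePreserving f μ ν)
    {g : β → E} (hg : AEStronglyMeasurable g ν) : ∫ x, g (f x) ∂μ = ∫ y, g y ∂ν := by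
  rw [← integral_map hf.aemeasurable (hf.map_eq ▸ hg), hf.map_eq]

lemma setIntegral_preimage_of_aestronglyMeasurable
    {E : Type*} [NormedAddCommGroup E] [NormedSpace ℝ E] (hf : MeasurePreserving f μ ν)
    {g : β → E} (hg : AEStronglyMeasurable g ν) {s : Set β} (hs : MeasurableSet s) :
    ∫ x in f ⁻¹' s, g (f x) ∂μ = ∫ y in s, g y ∂ν := by
  rw [← integral_indicator (hf.measurable hs), ← integral_indicator hs,
    ← hf.integral_comp_of_aestronglyMeasurable (hg.indicator hs)]
  rfl

lemma condExp_comp [IsFiniteMeasure μ] (hf : MeasurePreserving f μ ν) (hm : m ≤ mβ) {g : β → ℝ}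
    (hg : Integrable g ν) : ν[g | m] ∘ f =ᵐ[μ] μ[g ∘ f | m.comap f] := by
  have : IsFiniteMeasure ν := hf.map_eq ▸ inferInstance
  have hcomap : m.comap f ≤ mα := (MeasurableSpace.comap_mono hm).trans hf.measurable.comap_le
  refine ae_eq_condExp_of_forall_setIntegral_eq hcomap (hf.integrable_comp_of_integrable hg)
    (fun _ _ _ => (hf.integrable_comp_of_integrable integrable_condExp).integrableOn) ?_
    (stronglyMeasurable_condExp.comp_measurable (comap_measurable f)).aestronglyMeasurable
  rintro _ ⟨s, hs, rfl⟩ _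
  simp only [Function.comp_apply]
  rw [hf.setIntegral_preimage_of_aestronglyMeasurable
      (stronglyMeasurable_condExp.mono hm).aestronglyMeasurable (hm s hs),
    setIntegral_condExp hm hg hs,
    hf.setIntegral_preimage_of_aestronglyMeasurable hg.aestronglyMeasurable (hm s hs)]

end MeasureTheory.MeasurePreserving

namespace Rio

section Pathwise

variable (f : ℕ → ℝ)

lemma partialSups_add_one (j : ℕ) : partialSups f (j + 1) = partialSups f j ⊔ f (j + 1) :=
  partialSups_succ f j

lemma partialSups_add_one_sub_nonneg (j : ℕ) : 0 ≤ partialSups f (j + 1) - partialSups f j :=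
  sub_nonneg.2 <| partialSups_monotone f j.le_succ

lemma partialSups_add_one_sub_le_posPart (j : ℕ) :
    partialSups f (j + 1) - partialSups f j ≤ (f (j + 1) - f j)⁺ := by
  have := le_partialSups f j
  rw [partialSups_add_one, posPart_def]
  rcases le_total (f (j + 1)) (partialSups f j) with h | h
  · simp [h]
  · rw [sup_eq_right.2 h]; exact le_sup_of_le_left (by linarith)

lemma sq_partialSups_le (hf : f 0 = 0) (n : ℕ) :
    partialSups f n ^ 2 ≤ 4 * f n ^ 2
      - 4 * ∑ j ∈ range n, (partialSups f (j + 1) - partialSups f j) * (f n - f (j + 1)) := by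
  set M := partialSups f
  have hstep (j : ℕ) : M (j + 1) ^ 2 - M j ^ 2 ≤ 2 * ((M (j + 1) - M j) * f (j + 1)) := by
    rw [show M (j + 1) = M j ⊔ f (j + 1) from partialSups_add_one f j]
    rcases le_total (f (j + 1)) (M j) with h | h
    · rw [sup_eq_left.2 h]; simp
    · rw [sup_eq_right.2 h]; nlinarith
  have hsq : M n ^ 2 ≤ 2 * ∑ j ∈ range n, (M (j + 1) - M j) * f (j + 1) := by
    have := sum_le_sum fun j (_ : j ∈ range n) => hstep j
    rwa [sum_range_sub (M · ^ 2), ← mul_sum, show M 0 = 0 from (partialSups_zero f).trans hf,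
      zero_pow two_ne_zero, sub_zero] at this
  have hsplit : ∑ j ∈ range n, (M (j + 1) - M j) * (f n - f (j + 1))
      = M n * f n - ∑ j ∈ range n, (M (j + 1) - M j) * f (j + 1) := by
    have htel : ∑ j ∈ range n, (M (j + 1) - M j) = M n := by
      rw [sum_range_sub, show M 0 = 0 from (partialSups_zero f).trans hf, sub_zero]
    simp only [mul_sub, sum_sub_distrib, ← sum_mul, htel]
  rw [hsplit]
  nlinarith [sq_nonneg (M n - 2 * f n)]

lemma sq_le_sq_partialSups_add_sq_partialSups_neg (hf : f 0 = 0) {i n : ℕ} (hi : i ≤ n) :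
    f i ^ 2 ≤ partialSups f n ^ 2 + partialSups (-f) n ^ 2 := by
  have hle := le_partialSups_of_le f hi
  have hle' := le_partialSups_of_le (-f) hi
  have hnonneg := le_partialSups_of_le f (Nat.zero_le n)
  have hnonneg' := le_partialSups_of_le (-f) (Nat.zero_le n)
  simp only [Pi.neg_apply, hf, neg_zero] at hle' hnonneg hnonneg'
  rcases le_total 0 (f i) with h | h <;> nlinarith

lemma sub_mul_le_negPart_mul {p q x v : ℝ} (hp : 0 ≤ p) (hpx : p ≤ x⁺) (hq : 0 ≤ q)
    (hqx : q ≤ x⁻) : (q - p) * v ≤ (x * v)⁻ := by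
  rw [posPart_def] at hpx
  rw [negPart_def] at hqx ⊢
  rcases le_total 0 x with hx | hx
  · rw [max_eq_right (by linarith : -x ≤ 0)] at hqx
    rw [max_eq_left hx] at hpx
    rcases le_total 0 v with hv | hv
    · nlinarith [le_max_right (-(x * v)) 0]
    · nlinarith [le_max_left (-(x * v)) 0]
  · rw [max_eq_left (by linarith : 0 ≤ -x)] at hqx
    rw [max_eq_right hx] at hpx
    rcases le_total 0 v with hv | hv
    · nlinarith [le_max_left (-(x * v)) 0]
    · nlinarith [le_max_right (-(x * v)) 0]

/-- With `f 0 = 0`, `partialSups f j` is `M⁺ⱼ`, so this is the increment of `M⁻ - M⁺` at `j`. -/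
def partialSupsIncrement (j : ℕ) : ℝ :=
  (partialSups (-f) (j + 1) - partialSups (-f) j) - (partialSups f (j + 1) - partialSups f j)

lemma partialSupsIncrement_mul_le (j : ℕ) (v : ℝ) :
    partialSupsIncrement f j * v ≤ ((f (j + 1) - f j) * v)⁻ := by
  have hneg := partialSups_add_one_sub_le_posPart (-f) j
  rw [Pi.neg_apply, Pi.neg_apply, ← neg_sub', posPart_neg] at hneg
  exact sub_mul_le_negPart_mul (partialSups_add_one_sub_nonneg f j)
    (partialSups_add_one_sub_le_posPart f j) (partialSups_add_one_sub_nonneg (-f) j) hneg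

lemma iSup_sq_le (hf : f 0 = 0) (n : ℕ) :
    ⨆ i ∈ Icc 1 n, f i ^ 2
      ≤ 8 * f n ^ 2 + 4 * ∑ j ∈ range n, partialSupsIncrement f j * (f n - f (j + 1)) := by
  have hpos := sq_partialSups_le f hf n
  have hneg := sq_partialSups_le (-f) (by simp [hf]) n
  have hsum : ∑ j ∈ range n, partialSupsIncrement f j * (f n - f (j + 1))
      = -∑ j ∈ range n, (partialSups (-f) (j + 1) - partialSups (-f) j) * ((-f) n - (-f) (j + 1))
        - ∑ j ∈ range n, (partialSups f (j + 1) - partialSups f j) * (f n - f (j + 1)) := by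
    rw [← sum_neg_distrib, ← sum_sub_distrib]
    refine sum_congr rfl fun j _ => ?_
    simp only [partialSupsIncrement, Pi.neg_apply]; ring
  have hbound : ⨆ i ∈ Icc 1 n, f i ^ 2 ≤ partialSups f n ^ 2 + partialSups (-f) n ^ 2 :=
    Real.iSup_le (fun i => Real.iSup_le (fun hi =>
      sq_le_sq_partialSups_add_sq_partialSups_neg f hf (mem_Icc.1 hi).2) (by positivity))
      (by positivity)
  simp only [Pi.neg_apply, neg_sq] at hneg hsum
  linarith

end Pathwise

section Adapted

variable {Ω : Type*} {S : ℕ → Ω → ℝ}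

lemma measurable_partialSups_apply {m : MeasurableSpace Ω} {j : ℕ}
    (hS : ∀ k ≤ j, Measurable[m] (S k)) : Measurable[m] fun ω => partialSups (S · ω) j := by
  simp_rw [partialSups_eq_sup'_range]
  exact Finset.measurable_range_sup'' hS

lemma measurable_partialSupsIncrement {m : MeasurableSpace Ω} {j : ℕ}
    (hS : ∀ k ≤ j + 1, Measurable[m] (S k)) :
    Measurable[m] fun ω => partialSupsIncrement (S · ω) j := by
  have hS' k (hk : k ≤ j) := hS k (hk.trans j.le_succ)
  exact ((measurable_partialSups_apply (S := -S) fun k hk => (hS k hk).neg).sub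
    (measurable_partialSups_apply (S := -S) fun k hk => (hS' k hk).neg)).sub
    ((measurable_partialSups_apply hS).sub (measurable_partialSups_apply hS'))

lemma measurable_of_adapted_add_one {m0 : MeasurableSpace Ω} {ℱ : Filtration ℕ m0}
    (hS0 : S 0 = 0) (hS : Adapted ℱ fun j => S (j + 1)) {j k : ℕ} (hk : k ≤ j + 1) :
    Measurable[ℱ j] (S k) := by
  rcases k with _ | k
  · rw [hS0]; exact measurable_const
  · exact (hS k).mono (ℱ.mono (by omega)) le_rfl

variable {m0 : MeasurableSpace Ω} {μ : Measure Ω}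

lemma memLp_partialSups_apply {p : ENNReal} (hS : ∀ k, MemLp (S k) p μ) (j : ℕ) :
    MemLp (fun ω => partialSups (S · ω) j) p μ := by
  induction j with
  | zero => simpa using hS 0
  | succ j ih =>
    simp only [partialSups_add_one]
    exact ih.sup (hS (j + 1))

lemma memLp_partialSupsIncrement {p : ENNReal} (hS : ∀ k, MemLp (S k) p μ) (j : ℕ) :
    MemLp (fun ω => partialSupsIncrement (S · ω) j) p μ :=
  ((memLp_partialSups_apply (S := -S) (fun k => (hS k).neg) (j + 1)).sub
    (memLp_partialSups_apply (S := -S) (fun k => (hS k).neg) j)).sub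
    ((memLp_partialSups_apply hS (j + 1)).sub (memLp_partialSups_apply hS j))

variable [IsFiniteMeasure μ]

lemma integral_partialSupsIncrement_mul_le (ℱ : Filtration ℕ m0) (hS0 : S 0 = 0)
    (hS : Adapted ℱ fun j => S (j + 1)) (hL2 : ∀ k, MemLp (S k) 2 μ) (n j : ℕ) :
    ∫ ω, partialSupsIncrement (S · ω) j * (S n ω - S (j + 1) ω) ∂μ
      ≤ ∫ ω, ((S (j + 1) ω - S j ω) * μ[S n - S (j + 1) | ℱ j] ω)⁻ ∂μ := by
  have hW := (measurable_partialSupsIncrement (j := j) fun _ hk =>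
    measurable_of_adapted_add_one hS0 hS hk).stronglyMeasurable
  have hW2 := memLp_partialSupsIncrement hL2 j
  have hY2 := (hL2 n).sub (hL2 (j + 1))
  have hψ2 := hY2.condExp (m := ℱ j) one_le_two
  exact (integral_mul_condExp (ℱ.le j) hW (hW2.integrable_mul hY2)
    (hY2.integrable one_le_two)).trans_le (integral_mono (hW2.integrable_mul hψ2)
    (((hL2 (j + 1)).sub (hL2 j)).integrable_mul hψ2).neg_part
    fun ω => partialSupsIncrement_mul_le (S · ω) j _)

theorem integral_iSup_sq_le (ℱ : Filtration ℕ m0) (hS0 : S 0 = 0)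
    (hS : Adapted ℱ fun j => S (j + 1)) (hL2 : ∀ k, MemLp (S k) 2 μ) (n : ℕ) :
    ∫ ω, ⨆ i ∈ Icc 1 n, S i ω ^ 2 ∂μ ≤ 8 * ∫ ω, S n ω ^ 2 ∂μ
      + 4 * ∑ j ∈ range n, ∫ ω, ((S (j + 1) ω - S j ω) * μ[S n - S (j + 1) | ℱ j] ω)⁻ ∂μ := by
  have hterm (j : ℕ) : Integrable
      (fun ω => partialSupsIncrement (S · ω) j * (S n ω - S (j + 1) ω)) μ :=
    (memLp_partialSupsIncrement hL2 j).integrable_mul ((hL2 n).sub (hL2 (j + 1)))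
  have hsum := (integrable_finsetSum (range n) fun j _ => hterm j).const_mul 4
  calc ∫ ω, ⨆ i ∈ Icc 1 n, S i ω ^ 2 ∂μ
      ≤ ∫ ω, 8 * S n ω ^ 2
          + 4 * ∑ j ∈ range n, partialSupsIncrement (S · ω) j * (S n ω - S (j + 1) ω) ∂μ :=
        integral_mono_of_nonneg (ae_of_all _ fun ω => Real.iSup_nonneg fun i =>
            Real.iSup_nonneg fun _ => sq_nonneg _)
          (((hL2 n).integrable_sq.const_mul 8).add hsum)
          (ae_of_all _ fun ω => iSup_sq_le (S · ω) (congrFun hS0 ω) n)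
    _ = 8 * ∫ ω, S n ω ^ 2 ∂μ
          + 4 * ∑ j ∈ range n, ∫ ω, partialSupsIncrement (S · ω) j * (S n ω - S (j + 1) ω) ∂μ := by
        rw [integral_add ((hL2 n).integrable_sq.const_mul 8) hsum, integral_const_mul,
          integral_const_mul, integral_finsetSum _ fun j _ => hterm j]
    _ ≤ _ := by
        gcongr 8 * _ + 4 * ?_
        exact sum_le_sum fun j _ => integral_partialSupsIncrement_mul_le ℱ hS0 hS hL2 n j

end Adapted

lemma sum_range_tsub_eq_sum_range_add_one {M : Type*} [AddCommMonoid M] (g : ℕ → M) (n : ℕ) :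
    ∑ j ∈ range n, g (n - j) = ∑ k ∈ range n, g (k + 1) := by
  rw [← sum_range_reflect (fun k => g (k + 1)) n]
  exact sum_congr rfl fun j hj => congrArg g (by have := mem_range.1 hj; omega)

lemma sum_range_add_one_eq_sum_Icc_two {M : Type*} [AddCommMonoid M] (g : ℕ → M) (hg : g 1 = 0)
    (n : ℕ) : ∑ k ∈ range n, g (k + 1) = ∑ k ∈ Icc 2 n, g k := by
  induction n with
  | zero => simp
  | succ n ih =>
    rcases n with _ | n
    · simp [hg]
    · rw [sum_range_succ, ih, sum_Icc_succ_top (show 2 ≤ n + 1 + 1 by omega)]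

section Stationary

variable {Ω : Type*} {F0 m0 : MeasurableSpace Ω} {μ : Measure Ω}
  {T : Ω → Ω} {X0 : Ω → ℝ}

def iterateFiltration (hT : Measurable T) (hF0 : F0 ≤ m0) (hF0T : F0 ≤ F0.comap T) :
    Filtration ℕ m0 where
  seq j := F0.comap T^[j]
  mono' := monotone_nat_of_le_succ fun j => by
    rw [Function.iterate_succ', ← MeasurableSpace.comap_comp]
    exact MeasurableSpace.comap_mono hF0T
  le' j := (MeasurableSpace.comap_mono hF0).trans (hT.iterate j).comap_le

lemma adapted_birkhoffSum (hT : Measurable T) (hF0 : F0 ≤ m0) (hF0T : F0 ≤ F0.comap T)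
    (hX0 : Measurable[F0] X0) :
    Adapted (iterateFiltration hT hF0 hF0T) fun j => birkhoffSum T X0 (j + 1) := fun _ =>
  Finset.measurable_sum _ fun i hi =>
    (hX0.comp (comap_measurable T^[i])).mono
      ((iterateFiltration hT hF0 hF0T).mono (Nat.lt_succ_iff.1 (mem_range.1 hi))) le_rfl

lemma memLp_birkhoffSum (hT : MeasurePreserving T μ μ) {p : ENNReal} (hX0 : MemLp X0 p μ)
    (k : ℕ) : MemLp (birkhoffSum T X0 k) p μ :=
  memLp_finsetSum (range k) fun i _ => hX0.comp_measurePreserving (hT.iterate i)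

omit m0 in
lemma birkhoffSum_add_sub_birkhoffSum_add (j k l : ℕ) :
    birkhoffSum T X0 (j + k) - birkhoffSum T X0 (j + l)
      = (birkhoffSum T X0 k - birkhoffSum T X0 l) ∘ T^[j] := by
  ext ω
  simp [birkhoffSum_add]

lemma condExp_birkhoffSum_sub_ae_eq [IsFiniteMeasure μ] (hT : MeasurePreserving T μ μ)
    (hF0 : F0 ≤ m0) (hF0T : F0 ≤ F0.comap T) (hX0 : Integrable X0 μ) {j n : ℕ} (hjn : j ≤ n) :
    μ[birkhoffSum T X0 n - birkhoffSum T X0 (j + 1) | iterateFiltration hT.measurable hF0 hF0T j]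
      =ᵐ[μ] μ[birkhoffSum T X0 (n - j) - birkhoffSum T X0 1 | F0] ∘ T^[j] := by
  obtain ⟨k, rfl⟩ := Nat.exists_eq_add_of_le hjn
  have hX0' := memLp_one_iff_integrable.2 hX0
  have hint := ((memLp_birkhoffSum hT hX0' k).sub (memLp_birkhoffSum hT hX0' 1)).integrable le_rfl
  rw [Nat.add_sub_cancel_left, birkhoffSum_add_sub_birkhoffSum_add]
  exact ((hT.iterate j).condExp_comp hF0 hint).symm

lemma integral_negPart_mul_condExp_birkhoffSum [IsFiniteMeasure μ] (hT : MeasurePreserving T μ μ)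
    (hF0 : F0 ≤ m0) (hF0T : F0 ≤ F0.comap T) (hX0 : MemLp X0 2 μ) {j n : ℕ} (hjn : j ≤ n) :
    ∫ ω, ((birkhoffSum T X0 (j + 1) ω - birkhoffSum T X0 j ω)
        * μ[birkhoffSum T X0 n - birkhoffSum T X0 (j + 1)
          | iterateFiltration hT.measurable hF0 hF0T j] ω)⁻ ∂μ
      = ∫ ω, (X0 ω * μ[birkhoffSum T X0 (n - j) - birkhoffSum T X0 1 | F0] ω)⁻ ∂μ := by
  have hZ : Integrable
      (fun ω => X0 ω * μ[birkhoffSum T X0 (n - j) - birkhoffSum T X0 1 | F0] ω) μ :=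
    hX0.integrable_mul (((memLp_birkhoffSum hT hX0 (n - j)).sub
      (memLp_birkhoffSum hT hX0 1)).condExp one_le_two)
  rw [← (hT.iterate j).integral_comp_of_aestronglyMeasurable
    (g := fun ω => (X0 ω * μ[birkhoffSum T X0 (n - j) - birkhoffSum T X0 1 | F0] ω)⁻)
    hZ.neg_part.aestronglyMeasurable]
  refine integral_congr_ae ?_
  filter_upwards [condExp_birkhoffSum_sub_ae_eq hT hF0 hF0T (hX0.integrable one_le_two) hjn]
    with ω hω
  rw [hω, birkhoffSum_succ, add_sub_cancel_left]
  rfl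

lemma integral_birkhoffSum_sq (hT : MeasurePreserving T μ μ) (hX0 : MemLp X0 2 μ) (n : ℕ) :
    ∫ ω, birkhoffSum T X0 n ω ^ 2 ∂μ = n * ∫ ω, X0 ω ^ 2 ∂μ
      + 2 * ∑ k ∈ range n, ∫ ω, X0 ω * (birkhoffSum T X0 (k + 1) ω - birkhoffSum T X0 1 ω) ∂μ := by
  induction n with
  | zero => simp
  | succ m ih =>
    have hsq (ω : Ω) : birkhoffSum T X0 (m + 1) ω ^ 2 = X0 ω ^ 2
        + 2 * (X0 ω * (birkhoffSum T X0 (m + 1) ω - birkhoffSum T X0 1 ω))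
        + birkhoffSum T X0 m (T ω) ^ 2 := by
      rw [birkhoffSum_succ', birkhoffSum_one]; ring
    have hstat : ∫ ω, birkhoffSum T X0 m (T ω) ^ 2 ∂μ = ∫ ω, birkhoffSum T X0 m ω ^ 2 ∂μ :=
      hT.integral_comp_of_aestronglyMeasurable (g := (birkhoffSum T X0 m · ^ 2))
        (memLp_birkhoffSum hT hX0 m).integrable_sq.aestronglyMeasurable
    have hcross : Integrable (fun ω => 2 * (X0 ω * (birkhoffSum T X0 (m + 1) ω
        - birkhoffSum T X0 1 ω))) μ := (hX0.integrable_mul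
          ((memLp_birkhoffSum hT hX0 (m + 1)).sub (memLp_birkhoffSum hT hX0 1))).const_mul 2
    have hshift : Integrable (fun ω => birkhoffSum T X0 m (T ω) ^ 2) μ :=
      ((memLp_birkhoffSum hT hX0 m).comp_measurePreserving hT).integrable_sq
    have hfirst : Integrable (fun ω => X0 ω ^ 2 + 2 * (X0 ω * (birkhoffSum T X0 (m + 1) ω
        - birkhoffSum T X0 1 ω))) μ := hX0.integrable_sq.add hcross
    rw [integral_congr_ae (ae_of_all _ hsq), integral_add hfirst hshift,
      integral_add hX0.integrable_sq hcross, integral_const_mul, hstat, ih, sum_range_succ]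
    push_cast
    ring

lemma integral_birkhoffSum_sq_eq_condExp [IsFiniteMeasure μ] (hT : MeasurePreserving T μ μ)
    (hF0 : F0 ≤ m0) (hX0 : StronglyMeasurable[F0] X0) (hX0L2 : MemLp X0 2 μ) (n : ℕ) :
    ∫ ω, birkhoffSum T X0 n ω ^ 2 ∂μ = n * ∫ ω, X0 ω ^ 2 ∂μ + 2 * ∑ k ∈ range n,
      ∫ ω, X0 ω * μ[birkhoffSum T X0 (k + 1) - birkhoffSum T X0 1 | F0] ω ∂μ := by
  rw [integral_birkhoffSum_sq hT hX0L2]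
  refine congrArg _ (congrArg _ (sum_congr rfl fun k _ => ?_))
  have hY := (memLp_birkhoffSum hT hX0L2 (k + 1)).sub (memLp_birkhoffSum hT hX0L2 1)
  exact integral_mul_condExp hF0 hX0 (hX0L2.integrable_mul hY) (hY.integrable one_le_two)

theorem integral_iSup_sq_birkhoffSum_le [IsFiniteMeasure μ] (hT : MeasurePreserving T μ μ)
    (hF0 : F0 ≤ m0) (hF0T : F0 ≤ F0.comap T) (hX0 : Measurable[F0] X0) (hX0L2 : MemLp X0 2 μ)
    (n : ℕ) :
    ∫ ω, ⨆ i ∈ Icc 1 n, birkhoffSum T X0 i ω ^ 2 ∂μ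
      ≤ 8 * ∫ ω, birkhoffSum T X0 n ω ^ 2 ∂μ + 4 * ∑ k ∈ range n,
        ∫ ω, (X0 ω * μ[birkhoffSum T X0 (k + 1) - birkhoffSum T X0 1 | F0] ω)⁻ ∂μ := by
  refine (integral_iSup_sq_le (iterateFiltration hT.measurable hF0 hF0T) (birkhoffSum_zero' T X0)
    (adapted_birkhoffSum _ hF0 hF0T hX0) (memLp_birkhoffSum hT hX0L2) n).trans_eq ?_
  rw [sum_congr rfl fun j hj =>
    integral_negPart_mul_condExp_birkhoffSum hT hF0 hF0T hX0L2 (mem_range.1 hj).le]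
  exact congrArg _ (congrArg _ (sum_range_tsub_eq_sum_range_add_one
    (fun k => ∫ ω, (X0 ω * μ[birkhoffSum T X0 k - birkhoffSum T X0 1 | F0] ω)⁻ ∂μ) n))

lemma sum_integral_mul_condExp_add_negPart_le [IsFiniteMeasure μ] (hT : MeasurePreserving T μ μ)
    (hX0L2 : MemLp X0 2 μ) (n : ℕ) :
    4 * ∑ k ∈ range n,
        (4 * ∫ ω, X0 ω * μ[birkhoffSum T X0 (k + 1) - birkhoffSum T X0 1 | F0] ω ∂μ
          + ∫ ω, (X0 ω * μ[birkhoffSum T X0 (k + 1) - birkhoffSum T X0 1 | F0] ω)⁻ ∂μ)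
      ≤ 16 * ∑ k ∈ Icc 2 n,
        ∫ ω, |X0 ω * μ[birkhoffSum T X0 k - birkhoffSum T X0 1 | F0] ω| ∂μ := by
  rw [← sum_range_add_one_eq_sum_Icc_two
    (fun k => ∫ ω, |X0 ω * μ[birkhoffSum T X0 k - birkhoffSum T X0 1 | F0] ω| ∂μ) (by simp),
    show (16 : ℝ) = 4 * 4 by norm_num, mul_assoc]
  gcongr 4 * ?_
  rw [mul_sum]
  refine sum_le_sum fun k _ => ?_
  have hZ : Integrable
      (fun ω => X0 ω * μ[birkhoffSum T X0 (k + 1) - birkhoffSum T X0 1 | F0] ω) μ :=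
    hX0L2.integrable_mul (((memLp_birkhoffSum hT hX0L2 (k + 1)).sub
      (memLp_birkhoffSum hT hX0L2 1)).condExp one_le_two)
  linarith [integral_abs_eq_two_mul_integral_negPart_add_integral hZ,
    integral_nonneg (μ := μ) (f := fun ω =>
      (X0 ω * μ[birkhoffSum T X0 (k + 1) - birkhoffSum T X0 1 | F0] ω)⁻) fun ω => negPart_nonneg _]

end Stationary

end Rio

open Rio in
theorem stmt5_general
    {Ω : Type*} [m0 : MeasurableSpace Ω] (μ : Measure Ω) [IsProbabilityMeasure μ]
    (T : Ω → Ω) (hT : MeasurePreserving T μ μ)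
    (F0 : MeasurableSpace Ω) (hF0 : F0 ≤ m0) (hF0T : F0 ≤ F0.comap T)
    (X0 : Ω → ℝ) (hX0meas : StronglyMeasurable[F0] X0)
    (hX0L2 : MemLp X0 2 μ)
    (X : ℕ → Ω → ℝ) (hX : ∀ k, X k = X0 ∘ T^[k])
    (S : ℕ → Ω → ℝ) (hS : ∀ n, S n = fun ω => ∑ i ∈ Finset.range n, X i ω)
    (n : ℕ) :
    ∫ ω, (⨆ i ∈ Finset.Icc 1 n, (S i ω) ^ 2) ∂μ
      ≤ 8 * n * ∫ ω, (X0 ω) ^ 2 ∂μ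
        + 16 * ∑ k ∈ Finset.Icc 2 n,
            ∫ ω, |X0 ω * (μ[fun ω' => S k ω' - S 1 ω' | F0]) ω| ∂μ := by
  obtain rfl : S = birkhoffSum T X0 := funext fun k => by
    rw [hS k]; funext ω; simp [hX, birkhoffSum]
  calc ∫ ω, ⨆ i ∈ Icc 1 n, birkhoffSum T X0 i ω ^ 2 ∂μ
      ≤ 8 * ∫ ω, birkhoffSum T X0 n ω ^ 2 ∂μ + 4 * ∑ k ∈ range n,
          ∫ ω, (X0 ω * μ[birkhoffSum T X0 (k + 1) - birkhoffSum T X0 1 | F0] ω)⁻ ∂μ :=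
        integral_iSup_sq_birkhoffSum_le hT hF0 hF0T hX0meas.measurable hX0L2 n
    _ = 8 * n * ∫ ω, X0 ω ^ 2 ∂μ + 4 * ∑ k ∈ range n,
          (4 * ∫ ω, X0 ω * μ[birkhoffSum T X0 (k + 1) - birkhoffSum T X0 1 | F0] ω ∂μ
            + ∫ ω, (X0 ω * μ[birkhoffSum T X0 (k + 1) - birkhoffSum T X0 1 | F0] ω)⁻ ∂μ) := by
        rw [integral_birkhoffSum_sq_eq_condExp hT hF0 hX0meas hX0L2, sum_add_distrib, ← mul_sum]
        ring
    _ ≤ _ := add_le_add le_rfl (sum_integral_mul_condExp_add_negPart_le hT hX0L2 n)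

/-- Rio's maximal inequality
`E[max_{1≤i≤n} S_i²] ≤ 8 n E[X_0²] + 16 ∑_{k=2}^n E|X_0 E(S_k - S_1 | F_0)|`. -/
theorem stmt5
    {Ω : Type*} [m0 : MeasurableSpace Ω] (μ : Measure Ω) [IsProbabilityMeasure μ]
    (T : Ω → Ω) (hTmeas : Measurable T) (hT : MeasurePreserving T μ μ)
    (F0 : MeasurableSpace Ω) (hF0 : F0 ≤ m0) (hF0T : F0 ≤ F0.comap T)
    (X0 : Ω → ℝ) (hX0meas : StronglyMeasurable[F0] X0)
    (hX0L2 : MemLp X0 2 μ) (hX0cent : ∫ ω, X0 ω ∂μ = 0)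
    (X : ℕ → Ω → ℝ) (hX : ∀ k, X k = X0 ∘ T^[k])
    (S : ℕ → Ω → ℝ) (hS : ∀ n, S n = fun ω => ∑ i ∈ Finset.range n, X i ω)
    (n : ℕ) (hn : 1 ≤ n) :
    ∫ ω, (⨆ i ∈ Finset.Icc 1 n, (S i ω) ^ 2) ∂μ
      ≤ 8 * n * ∫ ω, (X0 ω) ^ 2 ∂μ
        + 16 * ∑ k ∈ Finset.Icc 2 n,
            ∫ ω, |X0 ω * (μ[fun ω' => S k ω' - S 1 ω' | F0]) ω| ∂μ :=
  stmt5_general (m0 := m0) μ T hT F0 hF0 hF0T X0 hX0meas hX0L2 X hX S hS n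
end

section
/- For a stationary adapted sequence $(X_k)$ of centered square-integrable random variables, with $2^{r-1} < n \leq 2^r$, the bound $2\|X_0\|_2 + 3\sum_{j=0}^{r-1}2^{-j/2}\|\mathbb{E}(S_{2^j}\mid\mathcal{F}_0)\|_2 \leq 2\|X_0\|_2 + 80\sum_{j=1}^n j^{-3/2}\|\mathbb{E}(S_j\mid\mathcal{F}_0)\|_2$ holds. -/
/-!
Write `u k = ‖𝔼[S_k | 𝓕₀]‖₂`. This sequence is subadditive: `S_{a+b} = S_a + S_b ∘ Tᵃ`, and since
`𝓕₀ ⊆ T⁻ᵃ 𝓕₀` the tower property and the invariance of `μ` give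
`𝔼[S_b ∘ Tᵃ | 𝓕₀] = 𝔼[𝔼[S_b | 𝓕₀] ∘ Tᵃ | 𝓕₀]`, whose norm is at most `u b` because conditional
expectation contracts `L²`.

For a nonnegative subadditive sequence, adding up `u N ≤ u k + u (N - k)` gives
`N u N ≤ 4 ∑_{k<N} u k`, hence `u (2ʲ) / 2^{j/2} ≤ 4 ∑_{k<2ʲ} (u k / k^{3/2}) (k / 2ʲ)`.
Summed over `j`, each `k` collects the weights `∑_{2ʲ > k} k / 2ʲ ≤ 2`, so the dyadic sum is at most
`9 ∑_{k ≤ n} u k / k^{3/2}` (the term `j = 0` is `u 1`).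
-/

open MeasureTheory Finset

theorem MeasurableSpace.le_comap_iterate {α : Type*} {m : MeasurableSpace α} {T : α → α}
    (h : m ≤ m.comap T) : ∀ k, m ≤ m.comap T^[k]
  | 0 => by rw [Function.iterate_zero, comap_id]
  | k + 1 => by
    rw [Function.iterate_succ, ← comap_comp]
    exact h.trans (comap_mono (le_comap_iterate h k))

namespace MeasureTheory

theorem MemLp.birkhoffSum {α F : Type*} [NormedAddCommGroup F] {mα : MeasurableSpace α}
    {μ : Measure α} {T : α → α} (hT : MeasurePreserving T μ μ) {g : α → F} {p : ENNReal}
    (hg : MemLp g p μ) (n : ℕ) : MemLp (birkhoffSum T g n) p μ :=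
  memLp_finsetSum _ fun k _ => hg.comp_measurePreserving (hT.iterate k)

variable {E : Type*} [NormedAddCommGroup E] [NormedSpace ℝ E] [CompleteSpace E]

theorem condExp_comp_measurePreserving {α β : Type*} {mα : MeasurableSpace α}
    {m mβ : MeasurableSpace β} {μ : Measure α} {ν : Measure β} [IsFiniteMeasure μ] (hm : m ≤ mβ)
    {φ : α → β} (hφ : MeasurePreserving φ μ ν) {f : β → E} (hf : Integrable f ν) :
    μ[f ∘ φ | m.comap φ] =ᵐ[μ] ν[f | m] ∘ φ := by
  have : IsFiniteMeasure ν := hφ.map_eq ▸ inferInstance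
  have hsetIntegral {g : β → E} (hg : AEStronglyMeasurable g ν) {t : Set β}
      (ht : MeasurableSet t) : ∫ x in φ ⁻¹' t, g (φ x) ∂μ = ∫ y in t, g y ∂ν := by
    rw [← hφ.map_eq] at hg ⊢
    exact (setIntegral_map ht hg hφ.measurable.aemeasurable).symm
  refine (ae_eq_condExp_of_forall_setIntegral_eq
    ((MeasurableSpace.comap_mono hm).trans hφ.measurable.comap_le)
    (hφ.integrable_comp_of_integrable hf)
    (fun s _ _ => (hφ.integrable_comp_of_integrable integrable_condExp).integrableOn) ?_
    (stronglyMeasurable_condExp.comp_measurable (comap_measurable φ)).aestronglyMeasurable).symm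
  rintro _ ⟨t, ht, rfl⟩ -
  have ht' : MeasurableSet[mβ] t := hm t ht
  rw [Function.comp_def, Function.comp_def,
    hsetIntegral (stronglyMeasurable_condExp.mono hm).aestronglyMeasurable ht',
    hsetIntegral hf.1 ht', setIntegral_condExp hm hf ht]

variable {α : Type*} {m mα : MeasurableSpace α} {μ : Measure α}

theorem eLpNorm_condExp_comp_le [IsFiniteMeasure μ] (hm : m ≤ mα)
    {T : α → α} (hT : MeasurePreserving T μ μ) (hmT : m ≤ m.comap T) {f : α → E}
    (hf : Integrable f μ) {p : ENNReal} (hp : 1 ≤ p) :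
    eLpNorm (μ[f ∘ T | m]) p μ ≤ eLpNorm (μ[f | m]) p μ :=
  calc eLpNorm (μ[f ∘ T | m]) p μ = eLpNorm (μ[μ[f ∘ T | m.comap T] | m]) p μ :=
        eLpNorm_congr_ae (condExp_condExp_of_le hmT
          ((MeasurableSpace.comap_mono hm).trans hT.measurable.comap_le)).symm
    _ = eLpNorm (μ[μ[f | m] ∘ T | m]) p μ :=
        eLpNorm_congr_ae (condExp_congr_ae (condExp_comp_measurePreserving hm hT hf))
    _ ≤ eLpNorm (μ[f | m] ∘ T) p μ := eLpNorm_condExp_le_eLpNorm _ hp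
    _ = eLpNorm (μ[f | m]) p μ :=
        eLpNorm_comp_measurePreserving (stronglyMeasurable_condExp.mono hm).aestronglyMeasurable hT

theorem eLpNorm_condExp_birkhoffSum_add_le [IsFiniteMeasure μ] (hm : m ≤ mα) {T : α → α}
    (hT : MeasurePreserving T μ μ) (hmT : m ≤ m.comap T)
    {g : α → E} {p : ENNReal} (hp : 1 ≤ p) (hg : MemLp g p μ) (a b : ℕ) :
    eLpNorm (μ[birkhoffSum T g (a + b) | m]) p μ
      ≤ eLpNorm (μ[birkhoffSum T g a | m]) p μ + eLpNorm (μ[birkhoffSum T g b | m]) p μ := by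
  have hint (k : ℕ) : Integrable (birkhoffSum T g k) μ := (hg.birkhoffSum hT k).integrable hp
  have hsplit : birkhoffSum T g (a + b) = birkhoffSum T g a + birkhoffSum T g b ∘ T^[a] :=
    funext (birkhoffSum_add T g a b)
  calc eLpNorm (μ[birkhoffSum T g (a + b) | m]) p μ
      = eLpNorm (μ[birkhoffSum T g a | m] + μ[birkhoffSum T g b ∘ T^[a] | m]) p μ := by
        rw [hsplit]
        exact eLpNorm_congr_ae
          (condExp_add (hint a) ((hT.iterate a).integrable_comp_of_integrable (hint b)) m)
    _ ≤ eLpNorm (μ[birkhoffSum T g a | m]) p μ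
          + eLpNorm (μ[birkhoffSum T g b ∘ T^[a] | m]) p μ :=
        eLpNorm_add_le (stronglyMeasurable_condExp.mono hm).aestronglyMeasurable
          (stronglyMeasurable_condExp.mono hm).aestronglyMeasurable hp
    _ ≤ _ := by
        gcongr
        exact eLpNorm_condExp_comp_le hm (hT.iterate a) (MeasurableSpace.le_comap_iterate hmT a)
          (hint b) hp

theorem subadditive_toReal_eLpNorm_condExp_birkhoffSum [IsFiniteMeasure μ] (hm : m ≤ mα)
    {T : α → α} (hT : MeasurePreserving T μ μ) (hmT : m ≤ m.comap T) {g : α → ℝ} {p : ENNReal}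
    (hp : 1 ≤ p) (hg : MemLp g p μ) :
    Subadditive fun n => (eLpNorm (μ[birkhoffSum T g n | m]) p μ).toReal := fun a b =>
  ENNReal.toReal_le_add (eLpNorm_condExp_birkhoffSum_add_le hm hT hmT hp hg a b)
    ((hg.birkhoffSum hT a).condExp hp).eLpNorm_ne_top
    ((hg.birkhoffSum hT b).condExp hp).eLpNorm_ne_top

end MeasureTheory

theorem sum_Ico_ite_lt_two_pow_div_le (k a b : ℕ) :
    ∑ j ∈ Ico a b, (if k < 2 ^ j then (k : ℝ) / 2 ^ j else 0) ≤ 2 := by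
  rcases Nat.eq_zero_or_pos k with rfl | hk
  · simp
  set j₀ := Nat.log 2 k + 1
  have hkj₀ : (k : ℝ) < 2 ^ j₀ := by exact_mod_cast Nat.lt_pow_succ_log_self one_lt_two k
  calc ∑ j ∈ Ico a b, (if k < 2 ^ j then (k : ℝ) / 2 ^ j else 0)
      = ∑ j ∈ (Ico a b).filter (k < 2 ^ ·), (k : ℝ) * 2⁻¹ ^ j := by
        rw [sum_filter]; simp only [inv_pow, div_eq_mul_inv]
    _ ≤ ∑ j ∈ Ico j₀ b, (k : ℝ) * 2⁻¹ ^ j := by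
        refine sum_le_sum_of_subset_of_nonneg (fun j hj => ?_) fun _ _ _ => by positivity
        simp only [mem_filter, mem_Ico] at hj ⊢
        exact ⟨Nat.log_lt_of_lt_pow hk.ne' hj.2, hj.1.2⟩
    _ ≤ k * (2⁻¹ ^ j₀ / (1 - 2⁻¹)) := by
        rw [← mul_sum]
        gcongr
        exact geom_sum_Ico_le_of_lt_one (by norm_num) (by norm_num)
    _ = 2 * (k / 2 ^ j₀) := by rw [inv_pow]; ring
    _ ≤ 2 := by
        have : (k : ℝ) / 2 ^ j₀ ≤ 1 := (div_le_one (by positivity)).mpr hkj₀.le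
        linarith

namespace Subadditive

variable {u : ℕ → ℝ}

theorem mul_le_four_mul_sum (hu : Subadditive u) (hu0 : ∀ k, 0 ≤ u k) {N : ℕ} (hN : 2 ≤ N) :
    N * u N ≤ 4 * ∑ k ∈ Ico 1 N, u k := by
  have hpair : ∑ _k ∈ Ico 1 N, u N ≤ 2 * ∑ k ∈ Ico 1 N, u k :=
    calc ∑ _k ∈ Ico 1 N, u N ≤ ∑ k ∈ Ico 1 N, (u k + u (N - k)) :=
          sum_le_sum fun k hk => by
            have hkN : k + (N - k) = N := by grind
            simpa only [hkN] using hu k (N - k)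
      _ = 2 * ∑ k ∈ Ico 1 N, u k := by
          rw [sum_add_distrib, sum_Ico_reflect u 1 (Nat.le_succ N), Nat.add_sub_cancel,
            Nat.add_sub_cancel_left, two_mul]
  have hcard : (N : ℝ) ≤ 2 * ((N - 1 : ℕ) : ℝ) := by
    rw [Nat.cast_sub (by omega), Nat.cast_one]
    have : (2 : ℝ) ≤ N := by exact_mod_cast hN
    linarith
  rw [sum_const, Nat.card_Ico, nsmul_eq_mul] at hpair
  calc (N : ℝ) * u N ≤ 2 * ((N - 1 : ℕ) : ℝ) * u N := by gcongr; exact hu0 N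
    _ ≤ 4 * ∑ k ∈ Ico 1 N, u k := by linarith

theorem div_sqrt_le_sum (hu : Subadditive u) (hu0 : ∀ k, 0 ≤ u k) {N n : ℕ} (hN : 2 ≤ N)
    (hNn : N ≤ n + 1) :
    u N / √N ≤ 4 * ∑ k ∈ Icc 1 n, if k < N then u k / (k * √k) * (k / N) else 0 := by
  have hfilter : (Icc 1 n).filter (· < N) = Ico 1 N := by
    ext k; simp only [mem_filter, mem_Icc, mem_Ico]; omega
  rw [← sum_filter, hfilter]
  have hNpos : (0 : ℝ) < N := by positivity
  calc u N / √N = N * u N / (N * √N) := by field_simp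
    _ ≤ 4 * ∑ k ∈ Ico 1 N, u k / (N * √N) := by
        rw [← sum_div, ← mul_div_assoc]
        exact div_le_div_of_nonneg_right (mul_le_four_mul_sum hu hu0 hN) (by positivity)
    _ ≤ 4 * ∑ k ∈ Ico 1 N, u k / (k * √k) * (k / N) := by
        gcongr with k hk
        have hk0 : (0 : ℝ) < k := by exact_mod_cast (mem_Ico.mp hk).1
        have hkN : (k : ℝ) ≤ N := by exact_mod_cast (mem_Ico.mp hk).2.le
        rw [show u k / (k * √k) * (k / N) = u k / (N * √k) by field_simp]
        gcongr
        exact hu0 k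

theorem sum_range_div_sqrt_two_pow_le (hu : Subadditive u) (hu0 : ∀ k, 0 ≤ u k) {n r : ℕ}
    (hr : 2 ^ (r - 1) < n) :
    ∑ j ∈ range r, u (2 ^ j) / √(2 ^ j) ≤ 9 * ∑ k ∈ Icc 1 n, u k / (k * √k) := by
  set c : ℕ → ℝ := fun k => u k / (k * √k)
  have hc0 : ∀ k, 0 ≤ c k := fun k => div_nonneg (hu0 k) (by positivity)
  have hW0 : 0 ≤ ∑ k ∈ Icc 1 n, c k := sum_nonneg fun k _ => hc0 k
  obtain _ | r := r
  · simp only [range_zero, sum_empty]; linarith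
  have hrn : 2 ^ r < n := by simpa using hr
  have hfirst : u 1 ≤ ∑ k ∈ Icc 1 n, c k := by
    have h1n : 1 ∈ Icc 1 n := mem_Icc.mpr ⟨le_rfl, by have := r.one_le_two_pow; omega⟩
    simpa [c] using single_le_sum (fun k _ => hc0 k) h1n
  have hblock : ∀ j ∈ Ico 1 (r + 1), u (2 ^ j) / √(2 ^ j)
      ≤ 4 * ∑ k ∈ Icc 1 n, c k * (if k < 2 ^ j then (k : ℝ) / 2 ^ j else 0) := by
    intro j hj
    have h2 : 2 ≤ 2 ^ j := by simpa using Nat.pow_le_pow_right two_pos (mem_Ico.mp hj).1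
    have hle : 2 ^ j ≤ 2 ^ r := Nat.pow_le_pow_right two_pos (by grind)
    have := div_sqrt_le_sum hu hu0 h2 (n := n) (by omega)
    simpa [c, mul_ite] using this
  calc ∑ j ∈ range (r + 1), u (2 ^ j) / √(2 ^ j)
      = u 1 + ∑ j ∈ Ico 1 (r + 1), u (2 ^ j) / √(2 ^ j) := by
        rw [sum_range_eq_add_Ico _ r.succ_pos]; simp
    _ ≤ u 1 + ∑ j ∈ Ico 1 (r + 1),
          4 * ∑ k ∈ Icc 1 n, c k * (if k < 2 ^ j then (k : ℝ) / 2 ^ j else 0) := by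
        gcongr with j hj; exact hblock j hj
    _ = u 1 + 4 * ∑ k ∈ Icc 1 n, c k *
          ∑ j ∈ Ico 1 (r + 1), (if k < 2 ^ j then (k : ℝ) / 2 ^ j else 0) := by
        simp only [mul_sum]; rw [sum_comm]
    _ ≤ u 1 + 4 * ∑ k ∈ Icc 1 n, c k * 2 := by
        gcongr with k
        · exact hc0 k
        · exact sum_Ico_ite_lt_two_pow_div_le k 1 (r + 1)
    _ ≤ 9 * ∑ k ∈ Icc 1 n, c k := by rw [← sum_mul]; linarith

theorem sum_range_div_rpow_le (hu : Subadditive u) (hu0 : ∀ k, 0 ≤ u k)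
    {n r : ℕ} (hr : 2 ^ (r - 1) < n) :
    ∑ j ∈ range r, u (2 ^ j) / (2 : ℝ) ^ ((j : ℝ) / 2)
      ≤ 9 * ∑ k ∈ Icc 1 n, u k / (k : ℝ) ^ ((3 : ℝ) / 2) := by
  have hsqrt_two_pow (j : ℕ) : (2 : ℝ) ^ ((j : ℝ) / 2) = √(2 ^ j) := by
    rw [Real.sqrt_eq_rpow, ← Real.rpow_natCast, ← Real.rpow_mul zero_le_two]; ring_nf
  have hmul_sqrt (k : ℕ) : (k : ℝ) ^ ((3 : ℝ) / 2) = k * √k := by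
    rw [show (3 : ℝ) / 2 = 1 + 1 / 2 by norm_num, Real.rpow_add' k.cast_nonneg (by norm_num),
      Real.rpow_one, Real.sqrt_eq_rpow]
  simpa only [hsqrt_two_pow, hmul_sqrt] using hu.sum_range_div_sqrt_two_pow_le hu0 hr

end Subadditive

theorem stmt7_general
    {Ω : Type*} [m0 : MeasurableSpace Ω] (μ : Measure Ω) [IsProbabilityMeasure μ]
    (T : Ω → Ω) (hT : MeasurePreserving T μ μ)
    (F0 : MeasurableSpace Ω) (hF0 : F0 ≤ m0) (hF0T : F0 ≤ F0.comap T)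
    (X0 : Ω → ℝ) (hX0L2 : MemLp X0 2 μ)
    (X : ℕ → Ω → ℝ) (hX : ∀ k, X k = X0 ∘ T^[k])
    (S : ℕ → Ω → ℝ) (hS : ∀ n, S n = fun ω => ∑ i ∈ Finset.range n, X i ω)
    (n r : ℕ) (hr1 : 2 ^ (r - 1) < n) :
    2 * (eLpNorm X0 2 μ).toReal
        + 3 * ∑ j ∈ Finset.range r,
            (eLpNorm (μ[S (2 ^ j) | F0]) 2 μ).toReal / (2 : ℝ) ^ ((j : ℝ) / 2)
      ≤ 2 * (eLpNorm X0 2 μ).toReal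
        + 80 * ∑ j ∈ Finset.Icc 1 n,
            (eLpNorm (μ[S j | F0]) 2 μ).toReal / (j : ℝ) ^ ((3 : ℝ) / 2) := by
  obtain rfl : S = birkhoffSum T X0 := by
    funext k ω
    simp only [hS, hX, birkhoffSum, Function.comp_apply]
  have hsub := subadditive_toReal_eLpNorm_condExp_birkhoffSum hF0 hT hF0T one_le_two hX0L2
  have hdyadic := hsub.sum_range_div_rpow_le (fun _ => ENNReal.toReal_nonneg) hr1
  have hW : 0 ≤ ∑ j ∈ Icc 1 n, (eLpNorm (μ[birkhoffSum T X0 j | F0]) 2 μ).toReal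
      / (j : ℝ) ^ ((3 : ℝ) / 2) := sum_nonneg fun _ _ => by positivity
  linarith

/-- comparison between the dyadic and full sums of normalized
conditional expectations, for `2^(r-1) < n ≤ 2^r`. -/
theorem stmt7
    {Ω : Type*} [m0 : MeasurableSpace Ω] (μ : Measure Ω) [IsProbabilityMeasure μ]
    (T : Ω → Ω) (hTmeas : Measurable T) (hT : MeasurePreserving T μ μ)
    (F0 : MeasurableSpace Ω) (hF0 : F0 ≤ m0) (hF0T : F0 ≤ F0.comap T)
    (X0 : Ω → ℝ) (hX0meas : StronglyMeasurable[F0] X0)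
    (hX0L2 : MemLp X0 2 μ) (hX0cent : ∫ ω, X0 ω ∂μ = 0)
    (X : ℕ → Ω → ℝ) (hX : ∀ k, X k = X0 ∘ T^[k])
    (S : ℕ → Ω → ℝ) (hS : ∀ n, S n = fun ω => ∑ i ∈ Finset.range n, X i ω)
    (n r : ℕ) (hr1 : 2 ^ (r - 1) < n) (hr2 : n ≤ 2 ^ r) :
    2 * (eLpNorm X0 2 μ).toReal
        + 3 * ∑ j ∈ Finset.range r,
            (eLpNorm (μ[S (2 ^ j) | F0]) 2 μ).toReal / (2 : ℝ) ^ ((j : ℝ) / 2)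
      ≤ 2 * (eLpNorm X0 2 μ).toReal
        + 80 * ∑ j ∈ Finset.Icc 1 n,
            (eLpNorm (μ[S j | F0]) 2 μ).toReal / (j : ℝ) ^ ((3 : ℝ) / 2) :=
  stmt7_general (m0 := m0) μ T hT F0 hF0 hF0T X0 hX0L2 X hX S hS n r hr1
end

section
/- If the stationary adapted centered $L^2$ sequence $(X_k)$ satisfies $\sum_{n=1}^\infty n^{-1/2}\|\mathbb{E}(X_n\mid\mathcal{F}_0)\|_2 < \infty$, then it satisfies the Maxwell–Woodroofe condition $\sum_{k=1}^\infty k^{-3/2}\|\mathbb{E}(S_k\mid\mathcal{F}_0)\|_2 < \infty$. -/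
/-!
Write `a i = ‖E(X_i | F₀)‖₂`, finite because `X_i = X₀ ∘ Tⁱ` is in `L²` and conditional expectation
is an `L²` contraction. Linearity of conditional expectation and the triangle inequality give
`‖E(S_{k+1} | F₀)‖₂ ≤ ∑_{i ≤ k} a i`. Exchanging the order of summation,
`∑_k (k+1)^{-3/2} ∑_{i ≤ k} a i = ∑_i a i ∑_{k ≥ i} (k+1)^{-3/2} ≤ 4 ∑_i a i (i+1)^{-1/2}`,
where the tail bound telescopes `x^{-3/2} ≤ 4 (x^{-1/2} - (x+1)^{-1/2})` for `x ≥ 1`.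
-/

open MeasureTheory

theorem one_div_rpow_three_halves_le {x : ℝ} (hx : 1 ≤ x) :
    1 / x ^ ((3 : ℝ) / 2) ≤ 4 / x ^ ((1 : ℝ) / 2) - 4 / (x + 1) ^ ((1 : ℝ) / 2) := by
  have h32 : x ^ ((3 : ℝ) / 2) = x * x ^ ((1 : ℝ) / 2) := by
    rw [show (3 : ℝ) / 2 = 1 + 1 / 2 by norm_num, Real.rpow_add (by linarith), Real.rpow_one]
  rw [h32, ← Real.sqrt_eq_rpow, ← Real.sqrt_eq_rpow]
  set s := √x
  set t := √(x + 1)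
  have hs2 : s ^ 2 = x := Real.sq_sqrt (by linarith)
  have ht2 : t ^ 2 = x + 1 := Real.sq_sqrt (by linarith)
  have hs1 : 1 ≤ s := Real.one_le_sqrt.mpr hx
  have hst : s ≤ t := Real.sqrt_le_sqrt (by linarith)
  have hts : t * (t + s) ≤ 4 * s ^ 2 := by nlinarith
  rw [← hs2, div_sub_div _ _ (by positivity) (by positivity),
    div_le_div_iff₀ (by positivity) (by positivity)]
  -- `t - s = 1 / (t + s)`
  nlinarith [mul_nonneg (sub_nonneg.2 hst) (sub_nonneg.2 hts)]

theorem sum_Ico_one_div_rpow_three_halves_le (i N : ℕ) :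
    ∑ k ∈ Finset.Ico i N, 1 / ((k : ℝ) + 1) ^ ((3 : ℝ) / 2) ≤ 4 / ((i : ℝ) + 1) ^ ((1 : ℝ) / 2) := by
  set g : ℕ → ℝ := fun k => 4 / ((k : ℝ) + 1) ^ ((1 : ℝ) / 2)
  rcases le_or_gt i N with hiN | hNi
  · calc ∑ k ∈ Finset.Ico i N, 1 / ((k : ℝ) + 1) ^ ((3 : ℝ) / 2)
        ≤ ∑ k ∈ Finset.Ico i N, -(g (k + 1) - g k) := Finset.sum_le_sum fun k _ => by
          simpa [g, add_assoc, one_add_one_eq_two] using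
            one_div_rpow_three_halves_le (x := (k : ℝ) + 1) (by simp)
      _ = g i - g N := by rw [Finset.sum_neg_distrib, Finset.sum_Ico_sub g hiN, neg_sub]
      _ ≤ g i := sub_le_self _ (by positivity)
  · rw [Finset.Ico_eq_empty_of_le hNi.le, Finset.sum_empty]
    positivity

theorem summable_sum_range_mul_of_sum_Ico_le {a w W : ℕ → ℝ} (ha : ∀ i, 0 ≤ a i)
    (hw : ∀ k, 0 ≤ w k) (hW : ∀ i N, ∑ k ∈ Finset.Ico i N, w k ≤ W i)
    (hs : Summable fun i => a i * W i) :
    Summable fun k => (∑ i ∈ Finset.range (k + 1), a i) * w k := by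
  have hW0 : ∀ i, 0 ≤ W i := fun i => by simpa using hW i i
  refine summable_of_sum_range_le (c := ∑' i, a i * W i)
    (fun k => mul_nonneg (Finset.sum_nonneg fun i _ => ha i) (hw k)) fun N => ?_
  calc ∑ k ∈ Finset.range N, (∑ i ∈ Finset.range (k + 1), a i) * w k
      = ∑ i ∈ Finset.Ico 0 N, ∑ k ∈ Finset.Ico i N, a i * w k := by
        rw [Finset.sum_Ico_Ico_comm]
        simp only [Finset.range_eq_Ico, Finset.sum_mul]
    _ = ∑ i ∈ Finset.range N, a i * ∑ k ∈ Finset.Ico i N, w k := by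
        simp only [Finset.range_eq_Ico, Finset.mul_sum]
    _ ≤ ∑ i ∈ Finset.range N, a i * W i :=
        Finset.sum_le_sum fun i _ => mul_le_mul_of_nonneg_left (hW i N) (ha i)
    _ ≤ ∑' i, a i * W i := hs.sum_le_tsum _ fun i _ => mul_nonneg (ha i) (hW0 i)

theorem toReal_eLpNorm_condExp_sum_le {α E ι : Type*} {m m0 : MeasurableSpace α} {μ : Measure α}
    [IsFiniteMeasure μ] [NormedAddCommGroup E] [NormedSpace ℝ E] [CompleteSpace E]
    {p : ENNReal} (hp : 1 ≤ p) {s : Finset ι} {f : ι → α → E} (hf : ∀ i ∈ s, MemLp (f i) p μ) :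
    (eLpNorm (μ[∑ i ∈ s, f i | m]) p μ).toReal ≤ ∑ i ∈ s, (eLpNorm (μ[f i | m]) p μ).toReal := by
  rw [eLpNorm_congr_ae (condExp_finsetSum (fun i hi => (hf i hi).integrable hp) m)]
  have hcond : ∀ i ∈ s, MemLp (μ[f i | m]) p μ := fun i hi => (hf i hi).condExp hp
  rw [toReal_eLpNorm (Finset.aestronglyMeasurable_sum _ fun i hi => (hcond i hi).1),
    Finset.sum_congr rfl fun i hi => toReal_eLpNorm (hcond i hi).1]
  exact lpNorm_sum_le hcond hp

theorem stmt10_general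
    {Ω : Type*} [m0 : MeasurableSpace Ω] (μ : Measure Ω) [IsProbabilityMeasure μ]
    (T : Ω → Ω) (hT : MeasurePreserving T μ μ)
    (F0 : MeasurableSpace Ω)
    (X0 : Ω → ℝ)
    (hX0L2 : MemLp X0 2 μ)
    (X : ℕ → Ω → ℝ) (hX : ∀ k, X k = X0 ∘ T^[k])
    (S : ℕ → Ω → ℝ) (hS : ∀ n, S n = fun ω => ∑ i ∈ Finset.range n, X i ω)
    (h : Summable (fun n : ℕ =>
        (eLpNorm (μ[X (n + 1) | F0]) 2 μ).toReal / ((n : ℝ) + 1) ^ ((1 : ℝ) / 2))) :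
    Summable (fun k : ℕ =>
        (eLpNorm (μ[S (k + 1) | F0]) 2 μ).toReal / ((k : ℝ) + 1) ^ ((3 : ℝ) / 2)) := by
  -- `F0` is also a `MeasurableSpace Ω` instance in scope, so `m0` is passed by hand.
  have hXL2 (i : ℕ) : MemLp (X i) 2 μ :=
    hX i ▸ hX0L2.comp_measurePreserving (@MeasurePreserving.iterate Ω m0 μ T hT i)
  set a : ℕ → ℝ := fun i => (eLpNorm (μ[X i | F0]) 2 μ).toReal
  have ha_weighted : Summable fun i => a i * (4 / ((i : ℝ) + 1) ^ ((1 : ℝ) / 2)) := by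
    rw [← summable_nat_add_iff 1]
    refine (h.mul_left 4).of_nonneg_of_le (fun n => by positivity) fun n => ?_
    rw [mul_div_left_comm]
    gcongr
    linarith
  refine (summable_sum_range_mul_of_sum_Ico_le (fun i => ENNReal.toReal_nonneg)
    (fun k => by positivity) sum_Ico_one_div_rpow_three_halves_le ha_weighted).of_nonneg_of_le
    (fun k => by positivity) fun k => ?_
  rw [mul_one_div]
  gcongr
  rw [hS, ← Finset.sum_fn]
  exact toReal_eLpNorm_condExp_sum_le one_le_two fun i _ => hXL2 i

/-- `∑ n^{-1/2} ‖E(X_n|F_0)‖₂ < ∞` implies the Maxwell–Woodroofe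
condition `∑ k^{-3/2} ‖E(S_k|F_0)‖₂ < ∞`. -/
theorem stmt10
    {Ω : Type*} [m0 : MeasurableSpace Ω] (μ : Measure Ω) [IsProbabilityMeasure μ]
    (T : Ω → Ω) (hTmeas : Measurable T) (hT : MeasurePreserving T μ μ)
    (F0 : MeasurableSpace Ω) (hF0 : F0 ≤ m0) (hF0T : F0 ≤ F0.comap T)
    (X0 : Ω → ℝ) (hX0meas : StronglyMeasurable[F0] X0)
    (hX0L2 : MemLp X0 2 μ) (hX0cent : ∫ ω, X0 ω ∂μ = 0)
    (X : ℕ → Ω → ℝ) (hX : ∀ k, X k = X0 ∘ T^[k])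
    (S : ℕ → Ω → ℝ) (hS : ∀ n, S n = fun ω => ∑ i ∈ Finset.range n, X i ω)
    (h : Summable (fun n : ℕ =>
        (eLpNorm (μ[X (n + 1) | F0]) 2 μ).toReal / ((n : ℝ) + 1) ^ ((1 : ℝ) / 2))) :
    Summable (fun k : ℕ =>
        (eLpNorm (μ[S (k + 1) | F0]) 2 μ).toReal / ((k : ℝ) + 1) ^ ((3 : ℝ) / 2)) :=
  stmt10_general (m0 := m0) μ T hT F0 X0 hX0L2 X hX S hS h
end

section
/- For a normal contraction $Q$ on $L^2(\pi)$ and $f \in L^2_0(\pi)$ with spectral measure $\rho_f$ on the closed unit disk $D$, the condition $\int_D |1-z|^{-1}\rho_f(dz) < \infty$ holds if and only if $\sum_{k=1}^\infty k^{-2}\|\mathbb{E}(S_k\mid\mathcal{F}_0)\|_2^2 < \infty$, where $\|\mathbb{E}(S_k\mid\mathcal{F}_0)\|_2^2 = \|\sum_{j=1}^{k} Q^j f\|_{L^2(\pi)}^2 = \int_D |z + \cdots + z^k|^2 \rho_f(dz)$. -/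
/-!
Write `S_n(z) = z + ⋯ + z^n` and `d = ‖1 - z‖` for `‖z‖ ≤ 1`. The geometric sum gives
`‖S_n‖ ≤ min n (2 / d)`, and `‖1 - z^j‖ ≤ j d` gives `‖S_n‖ ≥ n / 2` as long as `2 n d ≤ 1`.
Hence, pointwise on the disk, `∑ₙ ‖S_n(z)‖² / n²` lies between `(1/d - 2) / 8` and `8 / d`.
Since `ρ` is finite and the disk carries it, Tonelli turns the series of integrals into the
integral of this series, and the two integrability conditions are equivalent.
-/

open MeasureTheory Finset
open scoped ENNReal

section PartialGeomSum

variable {𝕜 : Type*} [RCLike 𝕜] {z : 𝕜}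

lemma norm_sum_pow_le_card (hz : ‖z‖ ≤ 1) (s : Finset ℕ) : ‖∑ j ∈ s, z ^ j‖ ≤ #s := by
  simpa using norm_sum_le_of_le s fun j _ =>
    (norm_pow z j).trans_le (pow_le_one₀ (norm_nonneg z) hz)

lemma norm_sum_Icc_pow_le (hz : ‖z‖ ≤ 1) (n : ℕ) : ‖∑ j ∈ Icc 1 n, z ^ j‖ ≤ n := by
  simpa using norm_sum_pow_le_card hz (Icc 1 n)

lemma norm_sum_Icc_pow_mul_norm_one_sub_le (hz : ‖z‖ ≤ 1) (n : ℕ) :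
    ‖∑ j ∈ Icc 1 n, z ^ j‖ * ‖1 - z‖ ≤ 2 := by
  have hpow (j : ℕ) : ‖z ^ j‖ ≤ 1 := (norm_pow z j).trans_le (pow_le_one₀ (norm_nonneg z) hz)
  rw [← norm_mul, ← Ico_add_one_right_eq_Icc, geom_sum_Ico_mul_neg _ (by omega)]
  linarith [norm_sub_le (z ^ 1) (z ^ (n + 1)), hpow 1, hpow (n + 1)]

/-- Combines the trivial bound `n` with the bound `2 / ‖1 - z‖`, without dividing by zero at
`z = 1`. -/
lemma norm_sum_Icc_pow_mul_le (hz : ‖z‖ ≤ 1) (n : ℕ) :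
    ‖∑ j ∈ Icc 1 n, z ^ j‖ * (n * ‖1 - z‖ + 2) ≤ 4 * n := by
  have h₁ := norm_sum_Icc_pow_le hz n
  have h₂ := norm_sum_Icc_pow_mul_norm_one_sub_le hz n
  have hn : (0 : ℝ) ≤ n := n.cast_nonneg
  nlinarith

lemma norm_one_sub_pow_le (hz : ‖z‖ ≤ 1) (j : ℕ) : ‖1 - z ^ j‖ ≤ j * ‖1 - z‖ := by
  rw [← mul_neg_geom_sum, norm_mul, mul_comm]
  gcongr
  simpa using norm_sum_pow_le_card hz (range j)

lemma half_le_norm_sum_Icc_pow (hz : ‖z‖ ≤ 1) {n : ℕ} (hn : 2 * n * ‖1 - z‖ ≤ 1) :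
    n / 2 ≤ ‖∑ j ∈ Icc 1 n, z ^ j‖ := by
  have hdefect : ‖(n : 𝕜) - ∑ j ∈ Icc 1 n, z ^ j‖ ≤ n * (n * ‖1 - z‖) := by
    calc ‖(n : 𝕜) - ∑ j ∈ Icc 1 n, z ^ j‖ = ‖∑ j ∈ Icc 1 n, (1 - z ^ j)‖ := by
          simp [sum_sub_distrib]
      _ ≤ ∑ j ∈ Icc 1 n, (j : ℝ) * ‖1 - z‖ :=
          norm_sum_le_of_le _ fun j _ => norm_one_sub_pow_le hz j
      _ ≤ ∑ _j ∈ Icc 1 n, (n : ℝ) * ‖1 - z‖ := by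
          gcongr with j hj
          exact_mod_cast (mem_Icc.mp hj).2
      _ = n * (n * ‖1 - z‖) := by simp
  have hrev := norm_sub_norm_le (n : 𝕜) ((n : 𝕜) - ∑ j ∈ Icc 1 n, z ^ j)
  rw [sub_sub_cancel, RCLike.norm_natCast] at hrev
  nlinarith [n.cast_nonneg (α := ℝ)]

end PartialGeomSum

lemma sum_range_inv_add_mul_sq_le {a d : ℝ} (ha : 0 < a) (hd : 0 < d) (n : ℕ) :
    ∑ k ∈ range n, 1 / (a + (k + 1) * d) ^ 2 ≤ 1 / (a * d) := by
  have hterm (k : ℕ) : 1 / (a + (k + 1) * d) ^ 2 ≤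
      (1 / (a + k * d) - 1 / (a + (k + 1 : ℕ) * d)) / d := by
    have hk : (0 : ℝ) ≤ k := k.cast_nonneg
    rw [div_le_div_iff₀ (by positivity) hd]
    push_cast
    field_simp
    nlinarith
  calc ∑ k ∈ range n, 1 / (a + (k + 1) * d) ^ 2
      ≤ ∑ k ∈ range n, (1 / (a + k * d) - 1 / (a + (k + 1 : ℕ) * d)) / d :=
        sum_le_sum fun k _ => hterm k
    _ = (1 / a - 1 / (a + n * d)) / d := by
        rw [← sum_div, sum_range_sub' (fun k : ℕ => 1 / (a + k * d))]
        simp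
    _ ≤ 1 / a / d := by gcongr; exact sub_le_self _ (by positivity)
    _ = 1 / (a * d) := div_div _ _ _

section CesaroSeries

variable {𝕜 : Type*} [RCLike 𝕜] {z : 𝕜}

lemma tsum_ofReal_norm_sum_Icc_pow_sq_div_le (hz : ‖z‖ ≤ 1) :
    ∑' k : ℕ, ENNReal.ofReal (‖∑ j ∈ Icc 1 (k + 1), z ^ j‖ ^ 2 / ((k : ℝ) + 1) ^ 2)
      ≤ 8 * (ENNReal.ofReal ‖1 - z‖)⁻¹ := by
  set d := ‖1 - z‖
  rcases (norm_nonneg (1 - z)).eq_or_lt with hd | hd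
  · simp [d, ← hd]
  have hterm (k : ℕ) : ‖∑ j ∈ Icc 1 (k + 1), z ^ j‖ ^ 2 / ((k : ℝ) + 1) ^ 2
      ≤ 16 * (1 / (2 + (k + 1) * d) ^ 2) := by
    have h := norm_sum_Icc_pow_mul_le hz (k + 1)
    push_cast at h
    rw [← div_pow, mul_one_div, show (16 : ℝ) = 4 ^ 2 by norm_num, ← div_pow]
    refine pow_le_pow_left₀ (by positivity) ?_ 2
    rw [div_le_div_iff₀ (by positivity) (by positivity)]
    linarith
  have h8 : 8 * (ENNReal.ofReal d)⁻¹ = ENNReal.ofReal (16 * (1 / (2 * d))) := by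
    rw [show 16 * (1 / (2 * d)) = 8 * d⁻¹ by field_simp; norm_num,
      ENNReal.ofReal_mul (by norm_num), ENNReal.ofReal_inv_of_pos hd, ENNReal.ofReal_ofNat]
  refine ENNReal.tsum_le_of_sum_range_le fun n => ?_
  rw [← ENNReal.ofReal_sum_of_nonneg fun k _ => by positivity, h8]
  refine ENNReal.ofReal_le_ofReal ((sum_le_sum fun k _ => hterm k).trans ?_)
  rw [← mul_sum]
  gcongr
  exact sum_range_inv_add_mul_sq_le two_pos hd n

lemma quarter_le_norm_sum_Icc_pow_sq_div (hz : ‖z‖ ≤ 1) {k : ℕ}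
    (hk : 2 * ((k : ℝ) + 1) * ‖1 - z‖ ≤ 1) :
    1 / 4 ≤ ‖∑ j ∈ Icc 1 (k + 1), z ^ j‖ ^ 2 / ((k : ℝ) + 1) ^ 2 := by
  have h := half_le_norm_sum_Icc_pow hz (n := k + 1) (by push_cast; exact hk)
  push_cast at h
  rw [le_div_iff₀ (by positivity)]
  nlinarith [k.cast_nonneg (α := ℝ)]

lemma inv_ofReal_norm_one_sub_le (hz : ‖z‖ ≤ 1) :
    (ENNReal.ofReal ‖1 - z‖)⁻¹
      ≤ 8 * ∑' k : ℕ, ENNReal.ofReal (‖∑ j ∈ Icc 1 (k + 1), z ^ j‖ ^ 2 / ((k : ℝ) + 1) ^ 2)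
        + 2 := by
  set d := ‖1 - z‖
  set G := ∑' k : ℕ, ENNReal.ofReal (‖∑ j ∈ Icc 1 (k + 1), z ^ j‖ ^ 2 / ((k : ℝ) + 1) ^ 2)
  rcases (norm_nonneg (1 - z)).eq_or_lt with hd | hd
  · suffices G = ⊤ by simp [this]
    refine top_unique ?_
    calc (⊤ : ℝ≥0∞) = ∑' _k : ℕ, ENNReal.ofReal (1 / 4) :=
          (ENNReal.tsum_const_eq_top_of_ne_zero (by norm_num)).symm
      _ ≤ G := ENNReal.tsum_le_tsum fun k =>
          ENNReal.ofReal_le_ofReal (quarter_le_norm_sum_Icc_pow_sq_div hz (by simp [← hd]))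
  set N := ⌊1 / (2 * d)⌋₊
  have hquarter : ENNReal.ofReal (N / 4) ≤ G := by
    calc ENNReal.ofReal (N / 4) = ∑ _k ∈ range N, ENNReal.ofReal (1 / 4) := by
          rw [← ENNReal.ofReal_sum_of_nonneg fun _ _ => by norm_num, sum_const, card_range,
            nsmul_eq_mul]
          ring_nf
      _ ≤ ∑ k ∈ range N, ENNReal.ofReal (‖∑ j ∈ Icc 1 (k + 1), z ^ j‖ ^ 2 / ((k : ℝ) + 1) ^ 2) := by
          refine sum_le_sum fun k hk =>
            ENNReal.ofReal_le_ofReal (quarter_le_norm_sum_Icc_pow_sq_div hz ?_)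
          have hkN : (k : ℝ) + 1 ≤ N := by exact_mod_cast mem_range.mp hk
          have hN : (N : ℝ) ≤ 1 / (2 * d) := Nat.floor_le (by positivity)
          rw [le_div_iff₀ (by positivity)] at hN
          nlinarith
      _ ≤ G := ENNReal.sum_le_tsum _
  have hN : 1 / d ≤ 8 * (N / 4) + 2 := by
    have hfloor := Nat.lt_floor_add_one (1 / (2 * d))
    rw [div_lt_iff₀ (by positivity)] at hfloor
    rw [div_le_iff₀ hd]
    nlinarith
  calc (ENNReal.ofReal d)⁻¹ = ENNReal.ofReal (1 / d) := by
        rw [one_div, ENNReal.ofReal_inv_of_pos hd]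
    _ ≤ ENNReal.ofReal (8 * (N / 4) + 2) := ENNReal.ofReal_le_ofReal hN
    _ = 8 * ENNReal.ofReal (N / 4) + 2 := by
        rw [ENNReal.ofReal_add (by positivity) (by norm_num), ENNReal.ofReal_mul (by norm_num)]
        simp
    _ ≤ 8 * G + 2 := by gcongr

end CesaroSeries

lemma summable_iff_tsum_ofReal_lt_top {ι : Type*} {f : ι → ℝ} (hf : ∀ i, 0 ≤ f i) :
    Summable f ↔ ∑' i, ENNReal.ofReal (f i) < ⊤ :=
  ⟨Summable.tsum_ofReal_lt_top, fun h =>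
    (ENNReal.summable_toReal h.ne).congr fun i => ENNReal.toReal_ofReal (hf i)⟩

section Integration

variable {α : Type*} [MeasurableSpace α] {μ : Measure α}

lemma summable_integral_iff_lintegral_tsum_lt_top {F : ℕ → α → ℝ} (hF : ∀ k, 0 ≤ᵐ[μ] F k)
    (hFi : ∀ k, Integrable (F k) μ) :
    Summable (fun k => ∫ x, F k x ∂μ) ↔ ∫⁻ x, ∑' k, ENNReal.ofReal (F k x) ∂μ < ⊤ := by
  rw [lintegral_tsum fun k => (hFi k).aemeasurable.ennreal_ofReal,
    ← tsum_congr fun k => ofReal_integral_eq_lintegral_ofReal (hFi k) (hF k)]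
  exact summable_iff_tsum_ofReal_lt_top fun k => integral_nonneg_of_ae (hF k)

variable [IsFiniteMeasure μ] {f g : α → ℝ≥0∞}

lemma lintegral_lt_top_of_ae_le_mul_add {a b : ℝ≥0∞} (ha : a ≠ ⊤) (hb : b ≠ ⊤)
    (hfg : ∀ᵐ x ∂μ, f x ≤ a * g x + b) (hg : ∫⁻ x, g x ∂μ < ⊤) : ∫⁻ x, f x ∂μ < ⊤ :=
  calc ∫⁻ x, f x ∂μ ≤ ∫⁻ x, (a * g x + b) ∂μ := lintegral_mono_ae hfg
    _ = a * ∫⁻ x, g x ∂μ + b * μ Set.univ := by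
        rw [lintegral_add_right _ measurable_const, lintegral_const, lintegral_const_mul' _ _ ha]
    _ < ⊤ := ENNReal.add_lt_top.2
        ⟨ENNReal.mul_lt_top ha.lt_top hg, ENNReal.mul_lt_top hb.lt_top (measure_lt_top μ _)⟩

lemma lintegral_lt_top_iff_of_ae_le {a b c : ℝ≥0∞} (ha : a ≠ ⊤) (hb : b ≠ ⊤) (hc : c ≠ ⊤)
    (hfg : ∀ᵐ x ∂μ, f x ≤ a * g x + b) (hgf : ∀ᵐ x ∂μ, g x ≤ c * f x) :
    ∫⁻ x, f x ∂μ < ⊤ ↔ ∫⁻ x, g x ∂μ < ⊤ :=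
  ⟨lintegral_lt_top_of_ae_le_mul_add hc ENNReal.zero_ne_top (by simpa using hgf),
    lintegral_lt_top_of_ae_le_mul_add ha hb hfg⟩

end Integration

theorem stmt15_general
    (ρ : Measure ℂ) [IsFiniteMeasure ρ]
    (hsupp : ρ {z : ℂ | 1 < ‖z‖} = 0) :
    (∫⁻ z, (ENNReal.ofReal ‖1 - z‖)⁻¹ ∂ρ < ⊤) ↔
      Summable (fun k : ℕ =>
        (∫ z, (‖∑ j ∈ Finset.Icc 1 (k + 1), z ^ j‖) ^ 2 ∂ρ)
          / ((k : ℝ) + 1) ^ 2) := by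
  have hdisk : ∀ᵐ z ∂ρ, ‖z‖ ≤ 1 := by
    rw [ae_iff]
    simpa only [not_le] using hsupp
  have hint (k : ℕ) :
      Integrable (fun z : ℂ => ‖∑ j ∈ Icc 1 (k + 1), z ^ j‖ ^ 2 / ((k : ℝ) + 1) ^ 2) ρ := by
    refine Integrable.of_bound (by fun_prop) 1 ?_
    filter_upwards [hdisk] with z hz
    rw [Real.norm_of_nonneg (by positivity), div_le_one (by positivity)]
    exact pow_le_pow_left₀ (norm_nonneg _) (by simpa using norm_sum_Icc_pow_le hz (k + 1)) 2
  simp_rw [← integral_div]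
  rw [summable_integral_iff_lintegral_tsum_lt_top
    (fun k => ae_of_all _ fun z => by positivity) hint]
  exact lintegral_lt_top_iff_of_ae_le (by norm_num) (by norm_num) (by norm_num)
    (hdisk.mono fun z hz => inv_ofReal_norm_one_sub_le hz)
    (hdisk.mono fun z hz => tsum_ofReal_norm_sum_Icc_pow_sq_div_le hz)

/-- for a normal Markov contraction `Q` with spectral measure `ρ` of `f`
on the closed unit disk, `∫ |1-z|⁻¹ dρ < ∞` if and only if
`∑_k k⁻² ∫ |z + ⋯ + z^k|² dρ < ∞` (i.e. `∑_k k⁻² ‖E(S_k|F_0)‖₂² < ∞`). -/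
theorem stmt15
    {S : Type*} [MeasurableSpace S] (π : Measure S) [IsProbabilityMeasure π]
    (Q : Lp ℂ 2 π →L[ℂ] Lp ℂ 2 π) (hQnormal : IsStarNormal Q) (hQnorm : ‖Q‖ ≤ 1)
    (f : Lp ℂ 2 π) (hfcent : ∫ x, f x ∂π = 0)
    (ρ : Measure ℂ) [IsFiniteMeasure ρ]
    (hsupp : ρ {z : ℂ | 1 < ‖z‖} = 0)
    (hspec : ∀ j k : ℕ,
      (inner ℂ f (((Q ^ j) * (ContinuousLinearMap.adjoint Q) ^ k) f) : ℂ)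
        = ∫ z, z ^ j * (starRingEnd ℂ z) ^ k ∂ρ)
    (hnorm : ∀ k : ℕ, ‖∑ j ∈ Finset.Icc 1 k, (Q ^ j) f‖ ^ 2
        = ∫ z, (‖∑ j ∈ Finset.Icc 1 k, z ^ j‖) ^ 2 ∂ρ) :
    (∫⁻ z, (ENNReal.ofReal ‖1 - z‖)⁻¹ ∂ρ < ⊤) ↔
      Summable (fun k : ℕ =>
        (∫ z, (‖∑ j ∈ Finset.Icc 1 (k + 1), z ^ j‖) ^ 2 ∂ρ)
          / ((k : ℝ) + 1) ^ 2) :=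
  stmt15_general ρ hsupp
end

section
/- Suppose a stationary adapted centered $L^2$ sequence $(X_k)$ satisfies: for every $j\geq 0$, $\Gamma_j = \sum_{k\geq j}\|X_j\,\mathbb{E}(X_k\mid\mathcal{F}_0)\|_1 < \infty$ and $\frac{1}{m}\sum_{j=0}^{m-1}\Gamma_j \to 0$ as $m\to\infty$. Then with $Y_0^m = \frac{1}{m}\mathbb{E}(X_1+\cdots+X_m\mid\mathcal{F}_0)$ and $Y_k^m = Y_0^m\circ T^k$, for any $l > m$ one has $\|Y_0^m\,\mathbb{E}(Y_{m+1}^m + \cdots + Y_l^m\mid\mathcal{F}_0)\|_1 \leq \frac{1}{m}\sum_{j=1}^m \sum_{k\geq m}\|\mathbb{E}(X_j\mid\mathcal{F}_0)\,\mathbb{E}(X_k\mid\mathcal{F}_0)\|_1$. -/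
open MeasureTheory Filter
open scoped ENNReal

/-!
Since `F₀ ≤ T⁻¹ F₀`, the tower property and stationarity give
`E(E(f | F₀) ∘ Tᵏ | F₀) = E(f ∘ Tᵏ | F₀)`, hence `E(Y_k^m | F₀) = m⁻¹ ∑_{i=1}^m E(X_{i+k} | F₀)`.
The product `Y_0^m E(Y_{m+1}^m + ⋯ + Y_l^m | F₀)` therefore expands into
`m⁻² ∑_{j ≤ m} ∑_{i ≤ m < k ≤ l} E(X_j | F₀) E(X_{i+k} | F₀)`. For fixed `j` and `i` the indices
`i + k` are distinct and at least `m`, so after the triangle inequality each of the `m` values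
of `i` contributes at most `∑_{n ≥ m} ‖E(X_j | F₀) E(X_n | F₀)‖₁`.
-/

theorem sum_Icc_add_le_tsum (h : ℕ → ℝ≥0∞) (i m l : ℕ) :
    ∑ k ∈ Finset.Icc (m + 1) l, h (i + k) ≤ ∑' n, h (m + n) := by
  calc ∑ k ∈ Finset.Icc (m + 1) l, h (i + k)
      = ∑ k ∈ Finset.Icc (m + 1) l, h (m + (i + k - m)) :=
        Finset.sum_congr rfl fun k hk => by rw [Finset.mem_Icc] at hk; congr 1; omega
    _ = ∑ n ∈ (Finset.Icc (m + 1) l).image (fun k => i + k - m), h (m + n) :=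
        (Finset.sum_image (g := fun k => i + k - m) (f := fun n => h (m + n))
          fun k hk k' hk' hkk' => by
            rw [Finset.mem_coe, Finset.mem_Icc] at hk hk'; simp only at hkk'; omega).symm
    _ ≤ ∑' n, h (m + n) := ENNReal.sum_le_tsum _

theorem sum_product_Icc_add_le (h : ℕ → ℝ≥0∞) (m l : ℕ) :
    ∑ p ∈ Finset.Icc 1 m ×ˢ Finset.Icc (m + 1) l, h (p.1 + p.2) ≤ m * ∑' n, h (m + n) := by
  calc ∑ p ∈ Finset.Icc 1 m ×ˢ Finset.Icc (m + 1) l, h (p.1 + p.2)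
      = ∑ i ∈ Finset.Icc 1 m, ∑ k ∈ Finset.Icc (m + 1) l, h (i + k) :=
        Finset.sum_product' _ _ fun i k => h (i + k)
    _ ≤ ∑ i ∈ Finset.Icc 1 m, ∑' n, h (m + n) :=
        Finset.sum_le_sum fun i _ => sum_Icc_add_le_tsum h i m l
    _ = m * ∑' n, h (m + n) := by rw [Finset.sum_const, Nat.card_Icc, nsmul_eq_mul]; simp

namespace MeasureTheory

variable {Ω : Type*} {F m0 : MeasurableSpace Ω} {μ : Measure Ω}

theorem ofReal_integral_abs_sum_mul_sum_le {ι κ : Type*} (s : Finset ι) (t : Finset κ)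
    (f : ι → Ω → ℝ) (g : κ → Ω → ℝ) (hfg : ∀ i j, Integrable (fun ω => f i ω * g j ω) μ) :
    ENNReal.ofReal (∫ ω, |(∑ i ∈ s, f i ω) * ∑ j ∈ t, g j ω| ∂μ)
      ≤ ∑ i ∈ s, ∑ j ∈ t, ENNReal.ofReal (∫ ω, |f i ω * g j ω| ∂μ) := by
  have hint : ∀ i, Integrable (fun ω => ∑ j ∈ t, |f i ω * g j ω|) μ := fun i =>
    integrable_finsetSum _ fun j _ => (hfg i j).abs
  have hpointwise : ∀ ω, |(∑ i ∈ s, f i ω) * ∑ j ∈ t, g j ω|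
      ≤ ∑ i ∈ s, ∑ j ∈ t, |f i ω * g j ω| := fun ω => by
    rw [Finset.sum_mul_sum]
    exact (Finset.abs_sum_le_sum_abs _ _).trans
      (Finset.sum_le_sum fun i _ => Finset.abs_sum_le_sum_abs _ _)
  have hle : ∫ ω, |(∑ i ∈ s, f i ω) * ∑ j ∈ t, g j ω| ∂μ
      ≤ ∑ i ∈ s, ∑ j ∈ t, ∫ ω, |f i ω * g j ω| ∂μ := by
    refine (integral_mono_of_nonneg (ae_of_all _ fun ω => abs_nonneg _)
      (integrable_finsetSum _ fun i _ => hint i) (ae_of_all _ hpointwise)).trans_eq ?_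
    rw [integral_finsetSum _ fun i _ => hint i]
    exact Finset.sum_congr rfl fun i _ => integral_finsetSum _ fun j _ => (hfg i j).abs
  have hnonneg : ∀ i j, 0 ≤ ∫ ω, |f i ω * g j ω| ∂μ := fun i j =>
    integral_nonneg fun ω => abs_nonneg _
  refine (ENNReal.ofReal_le_ofReal hle).trans_eq ?_
  rw [ENNReal.ofReal_sum_of_nonneg fun i _ => Finset.sum_nonneg fun j _ => hnonneg i j]
  exact Finset.sum_congr rfl fun i _ => ENNReal.ofReal_sum_of_nonneg fun j _ => hnonneg i j

theorem MeasurePreserving.setIntegral_preimage {β E : Type*} {mβ : MeasurableSpace β}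
    [NormedAddCommGroup E] [NormedSpace ℝ E] {ν : Measure β} {S : Ω → β}
    (hS : MeasurePreserving S μ ν) {t : Set β} (ht : MeasurableSet t) {g : β → E}
    (hg : AEStronglyMeasurable g ν) :
    ∫ x in S ⁻¹' t, g (S x) ∂μ = ∫ y in t, g y ∂ν := by
  rw [← setIntegral_map ht (by rwa [hS.map_eq]) hS.measurable.aemeasurable, hS.map_eq]

theorem MeasurePreserving.memLp_comp_iterate {E : Type*} [NormedAddCommGroup E] {T : Ω → Ω}
    (hT : MeasurePreserving T μ μ) {p : ℝ≥0∞} {f : Ω → E} (hf : MemLp f p μ) (k : ℕ) : MemLp (f ∘ T^[k]) p μ :=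
  hf.comp_measurePreserving (hT.iterate k)

theorem le_comap_iterate {T : Ω → Ω} (hFT : F ≤ F.comap T) :
    ∀ k : ℕ, F ≤ F.comap T^[k]
  | 0 => by rw [Function.iterate_zero, MeasurableSpace.comap_id]
  | k + 1 => by
    rw [Function.iterate_succ, ← MeasurableSpace.comap_comp]
    exact hFT.trans (MeasurableSpace.comap_mono (le_comap_iterate hFT k))

theorem condExp_comp_condExp {E : Type*} [NormedAddCommGroup E] [NormedSpace ℝ E]
    [CompleteSpace E] [IsFiniteMeasure μ] {S : Ω → Ω} (hS : MeasurePreserving S μ μ)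
    (hF : F ≤ m0) (hFS : F ≤ F.comap S) {f : Ω → E} (hf : Integrable f μ) :
    μ[μ[f | F] ∘ S | F] =ᵐ[μ] μ[f ∘ S | F] := by
  refine ae_eq_condExp_of_forall_setIntegral_eq hF (hS.integrable_comp_of_integrable hf)
    (fun s _ _ => integrable_condExp.integrableOn) (fun s hs _ => ?_)
    stronglyMeasurable_condExp.aestronglyMeasurable
  obtain ⟨t, ht, rfl⟩ := hFS s hs
  calc ∫ x in S ⁻¹' t, μ[μ[f | F] ∘ S | F] x ∂μ
      = ∫ x in S ⁻¹' t, μ[f | F] (S x) ∂μ :=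
        setIntegral_condExp hF (hS.integrable_comp_of_integrable integrable_condExp) hs
    _ = ∫ y in t, μ[f | F] y ∂μ :=
        hS.setIntegral_preimage (hF t ht) (stronglyMeasurable_condExp.mono hF).aestronglyMeasurable
    _ = ∫ y in t, f y ∂μ := setIntegral_condExp hF hf ht
    _ = ∫ x in S ⁻¹' t, f (S x) ∂μ := (hS.setIntegral_preimage (hF t ht) hf.1).symm

section Stationary

variable [IsFiniteMeasure μ] {T : Ω → Ω} {X0 : Ω → ℝ} {X : ℕ → Ω → ℝ}

theorem condExp_sum_comp_iterate (hT : MeasurePreserving T μ μ) (hF : F ≤ m0)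
    (hFT : F ≤ F.comap T) (hX0 : Integrable X0 μ) (hX : ∀ k, X k = X0 ∘ T^[k])
    (s : Finset ℕ) (k : ℕ) :
    μ[μ[∑ i ∈ s, X i | F] ∘ T^[k] | F] =ᵐ[μ] ∑ i ∈ s, μ[X (i + k) | F] := by
  have hXint : ∀ i, Integrable (X i) μ := fun i =>
    hX i ▸ (hT.iterate i).integrable_comp_of_integrable hX0
  have hshift : (∑ i ∈ s, X i) ∘ T^[k] = ∑ i ∈ s, X (i + k) := by
    ext ω
    simp only [Function.comp_apply, Finset.sum_apply, hX, Function.iterate_add_apply]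
  refine (condExp_comp_condExp (hT.iterate k) hF (le_comap_iterate hFT k)
    (integrable_finsetSum' _ fun i _ => hXint i)).trans ?_
  rw [hshift]
  exact condExp_finsetSum (fun i _ => hXint (i + k)) F

theorem condExp_sum_comp_iterate_smul_condExp_sum (hT : MeasurePreserving T μ μ)
    (hF : F ≤ m0) (hFT : F ≤ F.comap T) (hX0 : Integrable X0 μ) (hX : ∀ k, X k = X0 ∘ T^[k])
    (c : ℝ) (s t : Finset ℕ) :
    μ[∑ k ∈ t, (c • μ[∑ i ∈ s, X i | F]) ∘ T^[k] | F]
      =ᵐ[μ] c • ∑ p ∈ s ×ˢ t, μ[X (p.1 + p.2) | F] := by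
  have hterm : ∀ k, μ[(c • μ[∑ i ∈ s, X i | F]) ∘ T^[k] | F]
      =ᵐ[μ] c • ∑ i ∈ s, μ[X (i + k) | F] := fun k =>
    (condExp_smul c _ F).trans ((condExp_sum_comp_iterate hT hF hFT hX0 hX s k).const_smul c)
  refine (condExp_finsetSum (fun k _ => (hT.iterate k).integrable_comp_of_integrable
    (integrable_condExp.smul c)) F).trans ((eventuallyEq_sum fun k _ => hterm k).trans ?_)
  rw [← Finset.smul_sum, Finset.sum_comm,
    ← Finset.sum_product' (f := fun i k => μ[X (i + k) | F])]

theorem integral_abs_mul_condExp_sum_shifts (hT : MeasurePreserving T μ μ) (hF : F ≤ m0)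
    (hFT : F ≤ F.comap T) (hX0 : Integrable X0 μ) (hX : ∀ k, X k = X0 ∘ T^[k])
    (c : ℝ) (s t : Finset ℕ) {Y : ℕ → Ω → ℝ}
    (hY : ∀ k, Y k = (c • μ[∑ i ∈ s, X i | F]) ∘ T^[k]) :
    ∫ ω, |Y 0 ω * μ[∑ k ∈ t, Y k | F] ω| ∂μ
      = c * c * ∫ ω, |(∑ i ∈ s, μ[X i | F] ω) *
          ∑ p ∈ s ×ˢ t, μ[X (p.1 + p.2) | F] ω| ∂μ := by
  have hXint : ∀ i, Integrable (X i) μ := fun i =>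
    hX i ▸ (hT.iterate i).integrable_comp_of_integrable hX0
  have hY0 : Y 0 =ᵐ[μ] c • ∑ i ∈ s, μ[X i | F] := by
    rw [hY 0]
    exact (condExp_finsetSum (fun i _ => hXint i) F).const_smul c
  have hsum := condExp_sum_comp_iterate_smul_condExp_sum hT hF hFT hX0 hX c s t
  simp_rw [← hY] at hsum
  rw [← integral_const_mul]
  refine integral_congr_ae ?_
  filter_upwards [hY0, hsum] with ω hY0ω hsumω
  rw [hY0ω, hsumω]
  simp only [Pi.smul_apply, Finset.sum_apply, smul_eq_mul]
  rw [mul_mul_mul_comm, abs_mul, abs_of_nonneg (mul_self_nonneg c)]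

end Stationary

end MeasureTheory

theorem stmt19_general
    {Ω : Type*} [m0 : MeasurableSpace Ω] (μ : Measure Ω) [IsProbabilityMeasure μ]
    (T : Ω → Ω) (hT : MeasurePreserving T μ μ)
    (F0 : MeasurableSpace Ω) (hF0 : F0 ≤ m0) (hF0T : F0 ≤ F0.comap T)
    (X0 : Ω → ℝ)
    (hX0L2 : MemLp X0 2 μ)
    (X : ℕ → Ω → ℝ) (hX : ∀ k, X k = X0 ∘ T^[k])
    (m : ℕ)
    (Y : ℕ → Ω → ℝ)
    (hY0 : Y 0 = fun ω =>
        (1 / m : ℝ) * (μ[fun ω' => ∑ i ∈ Finset.Icc 1 m, X i ω' | F0]) ω)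
    (hY : ∀ k, Y k = Y 0 ∘ T^[k])
    (l : ℕ) :
    ENNReal.ofReal
        (∫ ω, |Y 0 ω * (μ[fun ω' => ∑ k ∈ Finset.Icc (m + 1) l, Y k ω' | F0]) ω| ∂μ)
      ≤ ((m : ℝ≥0∞))⁻¹ * ∑ j ∈ Finset.Icc 1 m, ∑' k : ℕ,
          ENNReal.ofReal (∫ ω, |(μ[X j | F0]) ω * (μ[X (m + k) | F0]) ω| ∂μ) := by
  -- for `m = 0` the junk value `1 / 0 = 0` makes `Y 0` vanish
  rcases Nat.eq_zero_or_pos m with rfl | hm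
  · simp [hY0]
  have hYk : ∀ k, Y k = ((1 / m : ℝ) • μ[∑ i ∈ Finset.Icc 1 m, X i | F0]) ∘ T^[k] := fun k => by
    rw [hY k, hY0, ← Finset.sum_fn]; rfl
  have hXL2 : ∀ k, MemLp (X k) 2 μ := fun k => hX k ▸ hT.memLp_comp_iterate hX0L2 k
  have hinv : ENNReal.ofReal (1 / m) = (m : ℝ≥0∞)⁻¹ := by
    rw [one_div, ENNReal.ofReal_inv_of_pos (by positivity), ENNReal.ofReal_natCast]
  rw [← Finset.sum_fn, integral_abs_mul_condExp_sum_shifts hT hF0 hF0T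
    (hX0L2.integrable one_le_two) hX _ _ _ hYk, ENNReal.ofReal_mul (by positivity),
    ENNReal.ofReal_mul (by positivity), hinv]
  calc _ ≤ (m : ℝ≥0∞)⁻¹ * (m : ℝ≥0∞)⁻¹ * ∑ j ∈ Finset.Icc 1 m,
          ∑ p ∈ Finset.Icc 1 m ×ˢ Finset.Icc (m + 1) l,
            ENNReal.ofReal (∫ ω, |μ[X j | F0] ω * μ[X (p.1 + p.2) | F0] ω| ∂μ) := by
        gcongr
        exact ofReal_integral_abs_sum_mul_sum_le _ _ _ _ fun i p =>
          ((hXL2 i).condExp one_le_two).integrable_mul ((hXL2 _).condExp one_le_two)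
    _ ≤ (m : ℝ≥0∞)⁻¹ * (m : ℝ≥0∞)⁻¹ * ∑ j ∈ Finset.Icc 1 m,
          m * ∑' k, ENNReal.ofReal (∫ ω, |μ[X j | F0] ω * μ[X (m + k) | F0] ω| ∂μ) := by
        gcongr with j
        exact sum_product_Icc_add_le
          (fun n => ENNReal.ofReal (∫ ω, |μ[X j | F0] ω * μ[X n | F0] ω| ∂μ)) m l
    _ = _ := by
        rw [← Finset.mul_sum, mul_assoc, ← mul_assoc _ (m : ℝ≥0∞),
          ENNReal.inv_mul_cancel (by positivity) (ENNReal.natCast_ne_top m), one_mul]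

/-- under the conditions of Proposition `underRio`, for `l > m`,
`‖Y_0^m E(Y_{m+1}^m + ⋯ + Y_l^m | F_0)‖₁ ≤ (1/m) ∑_{j=1}^m ∑_{k≥m} ‖E(X_j|F_0) E(X_k|F_0)‖₁`. -/
theorem stmt19
    {Ω : Type*} [m0 : MeasurableSpace Ω] (μ : Measure Ω) [IsProbabilityMeasure μ]
    (T : Ω → Ω) (hTmeas : Measurable T) (hT : MeasurePreserving T μ μ)
    (F0 : MeasurableSpace Ω) (hF0 : F0 ≤ m0) (hF0T : F0 ≤ F0.comap T)
    (X0 : Ω → ℝ) (hX0meas : StronglyMeasurable[F0] X0)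
    (hX0L2 : MemLp X0 2 μ) (hX0cent : ∫ ω, X0 ω ∂μ = 0)
    (X : ℕ → Ω → ℝ) (hX : ∀ k, X k = X0 ∘ T^[k])
    (hΓfin : ∀ j : ℕ, Summable (fun k : ℕ => ∫ ω, |X j ω * (μ[X (j + k) | F0]) ω| ∂μ))
    (hΓ0 : Tendsto (fun m : ℕ =>
        (1 / m : ℝ) * ∑ j ∈ Finset.range m,
          ∑' k : ℕ, ∫ ω, |X j ω * (μ[X (j + k) | F0]) ω| ∂μ) atTop (nhds 0))
    (m : ℕ) (hm : 1 ≤ m)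
    (Y : ℕ → Ω → ℝ)
    (hY0 : Y 0 = fun ω =>
        (1 / m : ℝ) * (μ[fun ω' => ∑ i ∈ Finset.Icc 1 m, X i ω' | F0]) ω)
    (hY : ∀ k, Y k = Y 0 ∘ T^[k])
    (l : ℕ) (hl : m < l) :
    ENNReal.ofReal
        (∫ ω, |Y 0 ω * (μ[fun ω' => ∑ k ∈ Finset.Icc (m + 1) l, Y k ω' | F0]) ω| ∂μ)
      ≤ ((m : ℝ≥0∞))⁻¹ * ∑ j ∈ Finset.Icc 1 m, ∑' k : ℕ,
          ENNReal.ofReal (∫ ω, |(μ[X j | F0]) ω * (μ[X (m + k) | F0]) ω| ∂μ) :=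
  stmt19_general (m0 := m0) μ T hT F0 hF0 hF0T X0 hX0L2 X hX m Y hY0 hY l
end
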